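/- arXiv:2102.03081 — 10 statements merged into one kernel-verified Lean document; each statement's English description precedes it below -/
import Mathlib

section
/- (Strongly absolute bases have the uniform peaking property, Remark 4.4 of the paper.) Let N be a normalized K-unconditional coefficient quasi-norm that is strongly absolute with function α. For a finitely supported g : ℕ → ℝ define the dual norm N*(g) = sup{ |∑_n g(n)·f(n)| : f finitely supported, N(f) ≤ 1 }. Then for all finitely supported f, g and every C ≥ 1 such that N*(g)·N(f) ≤ C·|∑_n g(n)·f(n)|, one has |∑_n g(n)·f(n)| ≤ α(2CK)·sup_n |g(n)·f(n)|. -/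
/-- A normalized `K`-unconditional coefficient quasi-norm on finitely supported
real sequences. -/
structure IsCoeffQuasiNorm (K : ℝ) (N : (ℕ →₀ ℝ) → ℝ) : Prop where
  nonneg : ∀ f, 0 ≤ N f
  eq_zero_iff : ∀ f, N f = 0 ↔ f = 0
  smul : ∀ (t : ℝ) (f : ℕ →₀ ℝ), N (t • f) = |t| * N f
  normalized : ∀ n : ℕ, N (Finsupp.single n 1) = 1
  uncond : ∀ f g : ℕ →₀ ℝ, (∀ n, |f n| ≤ |g n|) → N f ≤ K * N g

/-- `N` is strongly absolute with function `α`. -/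
def StronglyAbsolute (N : (ℕ →₀ ℝ) → ℝ) (α : ℝ → ℝ) : Prop :=
  ∀ R : ℝ, 0 < R → ∀ f : ℕ →₀ ℝ,
    ∑ n ∈ f.support, |f n| ≤ max (α R * ⨆ n, |f n|) (N f / R)

/-- The dual norm `N*(g) = sup { |∑ₙ g n · f n| : N f ≤ 1 }`. -/
noncomputable def dualNorm (N : (ℕ →₀ ℝ) → ℝ) (g : ℕ →₀ ℝ) : ℝ :=
  sSup {x | ∃ f : ℕ →₀ ℝ, N f ≤ 1 ∧ x = |∑ n ∈ g.support, g n * f n|}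

/-!
The coordinatewise product `h = g * f` satisfies `|⟨g, f⟩| ≤ ‖h‖₁` and, since every coordinate of
`g` is at most `N*(g)`, unconditionality gives `N(h) ≤ K · N*(g) · N(f) ≤ K C |⟨g, f⟩|`.
Applying strong absoluteness to `h` with `R = 2CK` therefore bounds `|⟨g, f⟩|` either by
`α(2CK) · ‖h‖_∞` or by `|⟨g, f⟩| / 2`, and the second alternative forces `⟨g, f⟩ = 0`.
-/

lemma abs_sum_le_sum_abs_mul (g f : ℕ →₀ ℝ) :
    |∑ n ∈ g.support, g n * f n| ≤ ∑ n ∈ (g * f).support, |(g * f) n| := by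
  calc |∑ n ∈ g.support, g n * f n| ≤ ∑ n ∈ g.support, |(g * f) n| :=
        Finset.abs_sum_le_sum_abs _ _
    _ = ∑ n ∈ (g * f).support, |(g * f) n| := by
        refine (Finset.sum_subset (Finsupp.support_mul.trans Finset.inter_subset_left) ?_).symm
        intro n _ hn
        rw [Finsupp.notMem_support_iff.mp hn, abs_zero]

lemma le_of_le_max_half {a P : ℝ} (ha : 0 ≤ a) (h : P ≤ max a (P / 2)) : P ≤ a := by
  rcases le_max_iff.mp h with h | h
  · exact h
  · linarith

namespace IsCoeffQuasiNorm

variable {K : ℝ} {N : (ℕ →₀ ℝ) → ℝ}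

lemma one_le (hN : IsCoeffQuasiNorm K N) : 1 ≤ K := by
  simpa [hN.normalized] using hN.uncond (Finsupp.single 0 1) (Finsupp.single 0 1) fun _ => le_rfl

lemma abs_apply_le (hN : IsCoeffQuasiNorm K N) (f : ℕ →₀ ℝ) (n : ℕ) : |f n| ≤ K * N f := by
  have hsingle : N (Finsupp.single n (f n)) = |f n| := by
    rw [show Finsupp.single n (f n) = f n • Finsupp.single n 1 by simp, hN.smul, hN.normalized,
      mul_one]
  rw [← hsingle]
  refine hN.uncond _ _ fun m => ?_
  rcases eq_or_ne n m with rfl | hnm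
  · simp
  · simp [hnm]

lemma bddAbove_dualNorm_set (hN : IsCoeffQuasiNorm K N) (g : ℕ →₀ ℝ) :
    BddAbove {x | ∃ f : ℕ →₀ ℝ, N f ≤ 1 ∧ x = |∑ n ∈ g.support, g n * f n|} := by
  refine ⟨∑ n ∈ g.support, |g n| * K, ?_⟩
  rintro x ⟨f, hf, rfl⟩
  have hcoord (n : ℕ) : |f n| ≤ K :=
    (hN.abs_apply_le f n).trans (mul_le_of_le_one_right (by linarith [hN.one_le]) hf)
  calc |∑ n ∈ g.support, g n * f n| ≤ ∑ n ∈ g.support, |g n * f n| :=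
        Finset.abs_sum_le_sum_abs _ _
    _ ≤ ∑ n ∈ g.support, |g n| * K := by
        gcongr with n
        rw [abs_mul]
        exact mul_le_mul_of_nonneg_left (hcoord n) (abs_nonneg _)

lemma dualNorm_nonneg (hN : IsCoeffQuasiNorm K N) (g : ℕ →₀ ℝ) : 0 ≤ dualNorm N g :=
  le_csSup (hN.bddAbove_dualNorm_set g) ⟨0, by rw [(hN.eq_zero_iff 0).mpr rfl]; norm_num, by simp⟩

lemma abs_apply_le_dualNorm (hN : IsCoeffQuasiNorm K N) (g : ℕ →₀ ℝ) (m : ℕ) :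
    |g m| ≤ dualNorm N g := by
  by_cases hm : m ∈ g.support
  · refine le_csSup (hN.bddAbove_dualNorm_set g) ⟨Finsupp.single m 1, (hN.normalized m).le, ?_⟩
    rw [Finset.sum_eq_single_of_mem m hm fun n _ hnm => by simp [hnm.symm]]
    simp
  · rw [Finsupp.notMem_support_iff.mp hm, abs_zero]
    exact hN.dualNorm_nonneg g

lemma mul_le_dualNorm_mul (hN : IsCoeffQuasiNorm K N) (g f : ℕ →₀ ℝ) :
    N (g * f) ≤ K * (dualNorm N g * N f) := by
  have hdual := hN.dualNorm_nonneg g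
  calc N (g * f) ≤ K * N (dualNorm N g • f) := hN.uncond _ _ fun n => by
        rw [Finsupp.mul_apply, Finsupp.smul_apply, smul_eq_mul, abs_mul, abs_mul,
          abs_of_nonneg hdual]
        exact mul_le_mul_of_nonneg_right (hN.abs_apply_le_dualNorm g n) (abs_nonneg _)
    _ = K * (dualNorm N g * N f) := by rw [hN.smul, abs_of_nonneg hdual]

end IsCoeffQuasiNorm

theorem stmt2_general (K : ℝ) (N : (ℕ →₀ ℝ) → ℝ) (α : ℝ → ℝ)
    (hα : ∀ R : ℝ, 0 < R → 0 < α R)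
    (hN : IsCoeffQuasiNorm K N) (hSA : StronglyAbsolute N α) :
    ∀ f g : ℕ →₀ ℝ, ∀ C : ℝ, 1 ≤ C →
      dualNorm N g * N f ≤ C * |∑ n ∈ g.support, g n * f n| →
      |∑ n ∈ g.support, g n * f n| ≤ α (2 * C * K) * ⨆ n, |g n * f n| := by
  intro f g C hC hle
  set P := |∑ n ∈ g.support, g n * f n|
  have hK := hN.one_le
  have hR : 0 < 2 * C * K := by positivity
  have hNgf : N (g * f) / (2 * C * K) ≤ P / 2 := by
    rw [div_le_div_iff₀ hR two_pos]
    nlinarith [hN.mul_le_dualNorm_mul g f, mul_le_mul_of_nonneg_left hle (by positivity : 0 ≤ K)]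
  refine le_of_le_max_half
    (mul_nonneg (hα _ hR).le (Real.iSup_nonneg fun _ => abs_nonneg _)) ?_
  calc P ≤ ∑ n ∈ (g * f).support, |(g * f) n| := abs_sum_le_sum_abs_mul g f
    _ ≤ max (α (2 * C * K) * ⨆ n, |(g * f) n|) (N (g * f) / (2 * C * K)) := hSA _ hR _
    _ ≤ _ := max_le_max le_rfl hNgf

/-- Remark 4.4: strongly absolute bases have the uniform peaking
property: if `N*(g)·N(f) ≤ C·|⟨g,f⟩|` then `|⟨g,f⟩| ≤ α(2CK)·supₙ |g n · f n|`. -/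
theorem stmt2 (K : ℝ) (hK : 1 ≤ K) (N : (ℕ →₀ ℝ) → ℝ) (α : ℝ → ℝ)
    (hα : ∀ R : ℝ, 0 < R → 0 < α R)
    (hN : IsCoeffQuasiNorm K N) (hSA : StronglyAbsolute N α) :
    ∀ f g : ℕ →₀ ℝ, ∀ C : ℝ, 1 ≤ C →
      dualNorm N g * N f ≤ C * |∑ n ∈ g.support, g n * f n| →
      |∑ n ∈ g.support, g n * f n| ≤ α (2 * C * K) * ⨆ n, |g n * f n| :=
  stmt2_general K N α hα hN hSA
end

section
/- (Proposition 6.2(b) of the paper: strong absoluteness of the unit vector basis of d_{1,q}(w) for 1 < q < ∞.) Let 1 < q < ∞ and let q′ = q/(q−1) be its conjugate exponent. Let w be a weight with w_n > 0 for all n and primitive weight (s_n), and suppose ∑_{n=1}^∞ w_n^{1−q′}·s_n^{−1} < ∞. Then for every R > 0 there exists a constant C > 0 such that every admissible sequence (a_n) satisfies ∑_n a_n ≤ max( C·a_1, (1/R)·(∑_n a_n^q s_n^{q−1} w_n)^{1/q} ). -/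
/-!
Split `∑ aₙ` at an index `N`. The first `N` terms are at most `N·a₀` because `a` is
non-increasing. On the tail, weighted Hölder with weights `gₙ = wₙ^{1-q'}/sₙ` gives
`∑_{n≥N} aₙ ≤ (∑_{n≥N} gₙ)^{1/q'} (∑ aₙ^q gₙ^{1-q})^{1/q}`, and `gₙ^{1-q} = sₙ^{q-1} wₙ` is
exactly the Lorentz weight. Summability of `g` makes the tail factor at most `1/(2R)` for large `N`,
so `∑ aₙ ≤ N·a₀ + (1/(2R))‖a‖ ≤ max (2(N+1)·a₀) ((1/R)‖a‖)` with `‖a‖ = (∑ aₙ^q sₙ^{q-1} wₙ)^{1/q}`.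

Indices start at `0`: `a 0` is `a₁` and `∑ k ∈ range (n + 1), w k` is `s_{n+1}`.
-/

open Finset

theorem Real.sum_le_weight_mul_Lp_of_pos {ι : Type*} (s : Finset ι) {p : ℝ}
    (hp : 1 ≤ p) {g a : ι → ℝ} (hg : ∀ i, 0 < g i) (ha : ∀ i, 0 ≤ a i) :
    ∑ i ∈ s, a i ≤ (∑ i ∈ s, g i) ^ (1 - p⁻¹) * (∑ i ∈ s, a i ^ p * g i ^ (1 - p)) ^ p⁻¹ := by
  have key := Real.inner_le_weight_mul_Lp_of_nonneg s hp g (fun i => a i / g i)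
    (fun i => (hg i).le) (fun i => div_nonneg (ha i) (hg i).le)
  have h1 : ∀ i, g i * (a i / g i) = a i := fun i => mul_div_cancel₀ _ (hg i).ne'
  have h2 : ∀ i, g i * (a i / g i) ^ p = a i ^ p * g i ^ (1 - p) := fun i => by
    rw [Real.div_rpow (ha i) (hg i).le, Real.rpow_sub (hg i), Real.rpow_one]
    field_simp
  simpa only [h1, h2] using key

theorem Summable.exists_forall_sum_Ico_lt {f : ℕ → ℝ} (hf : Summable f) {ε : ℝ} (hε : 0 < ε) :
    ∃ N, ∀ M, ∑ n ∈ Ico N M, f n < ε := by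
  obtain ⟨t, ht⟩ := summable_iff_vanishing.1 hf _ (Iio_mem_nhds hε)
  obtain ⟨N, htN⟩ := t.exists_nat_subset_range
  exact ⟨N, fun M => ht _ (disjoint_of_subset_right htN
    (disjoint_left.2 fun n hn hn' => by simp only [mem_Ico, mem_range] at hn hn'; omega))⟩

theorem rpow_one_sub_conjExponent_div_rpow_one_sub {q q' x y : ℝ} (hq : 1 < q)
    (hq' : q' = q / (q - 1)) (hx : 0 < x) (hy : 0 < y) :
    (x ^ (1 - q') / y) ^ (1 - q) = y ^ (q - 1) * x := by
  have hq1 : q - 1 ≠ 0 := sub_ne_zero.2 hq.ne'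
  have hexp : (1 - q') * (1 - q) = 1 := by rw [hq']; field_simp; ring
  rw [Real.div_rpow (Real.rpow_nonneg hx.le _) hy.le, ← Real.rpow_mul hx.le, hexp, Real.rpow_one,
    div_eq_mul_inv, ← Real.rpow_neg hy.le, neg_sub, mul_comm]

theorem Antitone.sum_range_le_mul_add_weight_mul_Lp {a g : ℕ → ℝ} (hanti : Antitone a) {p : ℝ}
    (hp : 1 ≤ p) (ha : ∀ n, 0 ≤ a n) (hg : ∀ n, 0 < g n) {N M : ℕ} (hNM : N ≤ M) :
    ∑ n ∈ range M, a n ≤ N * a 0 +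
      (∑ n ∈ Ico N M, g n) ^ (1 - p⁻¹) * (∑ n ∈ range M, a n ^ p * g n ^ (1 - p)) ^ p⁻¹ := by
  have hhead : ∑ n ∈ range N, a n ≤ N * a 0 := by
    simpa using sum_le_card_nsmul (range N) a (a 0) fun n _ => hanti n.zero_le
  have hterm : ∀ n, 0 ≤ a n ^ p * g n ^ (1 - p) := fun n => by
    have := ha n; have := hg n; positivity
  have htail : ∑ n ∈ Ico N M, a n ≤
      (∑ n ∈ Ico N M, g n) ^ (1 - p⁻¹) * (∑ n ∈ range M, a n ^ p * g n ^ (1 - p)) ^ p⁻¹ := by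
    refine Real.sum_le_weight_mul_Lp_of_pos (Ico N M) hp hg ha |>.trans ?_
    gcongr
    · exact Real.rpow_nonneg (sum_nonneg fun n _ => (hg n).le) _
    · exact sum_nonneg fun n _ => hterm n
    · exact fun n _ _ => hterm n
    · exact fun n hn => mem_range.2 (mem_Ico.1 hn).2
  rw [← sum_range_add_sum_Ico _ hNM]
  linarith

theorem exists_tsum_le_max_of_summable_weight {p : ℝ} (hp : 1 < p) {g : ℕ → ℝ}
    (hg : ∀ n, 0 < g n) (hsum : Summable g) {R : ℝ} (hR : 0 < R) :
    ∃ C > 0, ∀ a : ℕ → ℝ, (∀ n, 0 ≤ a n) → Antitone a → (∃ N, ∀ n ≥ N, a n = 0) →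
      ∑' n, a n ≤ max (C * a 0) (1 / R * (∑' n, a n ^ p * g n ^ (1 - p)) ^ (1 / p)) := by
  have hp' : 0 < 1 - p⁻¹ := sub_pos.2 (inv_lt_one_of_one_lt₀ hp)
  obtain ⟨N, hN⟩ := hsum.exists_forall_sum_Ico_lt (ε := (2 * R)⁻¹ ^ (1 - p⁻¹)⁻¹) (by positivity)
  refine ⟨2 * (N + 1), by positivity, fun a ha hanti ⟨N₀, hN₀⟩ => ?_⟩
  set M := max N N₀
  have haM : ∀ n ∉ range M, a n = 0 := fun n hn =>
    hN₀ n (le_of_max_le_right (not_lt.1 (mt mem_range.2 hn)))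
  have htail : (∑ n ∈ Ico N M, g n) ^ (1 - p⁻¹) ≤ (2 * R)⁻¹ := by
    calc _ ≤ ((2 * R)⁻¹ ^ (1 - p⁻¹)⁻¹) ^ (1 - p⁻¹) := by
          gcongr
          · exact sum_nonneg fun n _ => (hg n).le
          · exact (hN M).le
      _ = (2 * R)⁻¹ := Real.rpow_inv_rpow (by positivity) hp'.ne'
  have hsplit := hanti.sum_range_le_mul_add_weight_mul_Lp hp.le ha hg (le_max_left N N₀)
  rw [tsum_eq_sum haM, tsum_eq_sum (s := range M) fun n hn => by
    simp [haM n hn, Real.zero_rpow (by linarith : p ≠ 0)], one_div p]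
  set Y := (∑ n ∈ range M, a n ^ p * g n ^ (1 - p)) ^ p⁻¹
  have hY : 0 ≤ Y := Real.rpow_nonneg (sum_nonneg fun n _ => by
    have := ha n; have := hg n; positivity) _
  have hhalf : (2 * R)⁻¹ * Y = 1 / R * Y / 2 := by field_simp
  linarith [mul_le_mul_of_nonneg_right htail hY, le_max_left (2 * (N + 1) * a 0) (1 / R * Y),
    le_max_right (2 * (N + 1) * a 0) (1 / R * Y), ha 0]

/-- Proposition 6.2(b): strong absoluteness of the unit vector basis of
`d_{1,q}(w)` for `1 < q < ∞`.  Indices are shifted to start at `0`: `w n` is the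
weight `w_{n+1}` of the paper and `s_{n+1} = ∑_{k ∈ range (n+1)} w k`.  If
`∑ₙ wₙ^{1-q'}·sₙ⁻¹ < ∞`, where `q' = q/(q-1)`, then for every `R > 0` there is
`C > 0` such that every admissible sequence `a` satisfies
`∑ₙ aₙ ≤ max (C·a₁) ((1/R)·(∑ₙ aₙ^q·sₙ^{q-1}·wₙ)^{1/q})`. -/
theorem stmt6 (q q' : ℝ) (hq : 1 < q) (hq' : q' = q / (q - 1))
    (w : ℕ → ℝ) (hw : ∀ n, 0 < w n)
    (hsum : Summable fun n =>
      w n ^ (1 - q') / ∑ k ∈ Finset.range (n + 1), w k) :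
    ∀ R : ℝ, 0 < R → ∃ C > 0, ∀ a : ℕ → ℝ,
      (∀ n, 0 ≤ a n) → Antitone a → (∃ N, ∀ n ≥ N, a n = 0) →
      ∑' n, a n ≤
        max (C * a 0)
          ((1 / R) *
            (∑' n, a n ^ q * (∑ k ∈ Finset.range (n + 1), w k) ^ (q - 1) * w n)
              ^ (1 / q)) := by
  intro R hR
  have hs : ∀ n, 0 < ∑ k ∈ range (n + 1), w k := fun n =>
    sum_pos (fun k _ => hw k) nonempty_range_add_one
  obtain ⟨C, hC, hbound⟩ := exists_tsum_le_max_of_summable_weight hq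
    (fun n => div_pos (Real.rpow_pos_of_pos (hw n) _) (hs n)) hsum hR
  refine ⟨C, hC, fun a ha hanti hfin => ?_⟩
  simpa only [rpow_one_sub_conjExponent_div_rpow_one_sub hq hq' (hw _) (hs _), mul_assoc]
    using hbound a ha hanti hfin
end

section
/- (Proposition 6.2(c)(i) of the paper: d_{1,1}(w) ⊆ ℓ₁.) Let w be a weight with primitive weight (s_n). The following are equivalent: (i) there exists a constant C > 0 such that ∑_n a_n ≤ C·∑_n a_n·w_n for every admissible sequence (a_n); (ii) inf_n s_n/n > 0. (Condition (i) expresses the continuous inclusion of the Lorentz sequence space d_{1,1}(w) into ℓ₁.) -/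
/-! Both directions go through the partial sums `S n = ∑ k < n, w k`. Testing the inclusion on
the indicator of `{0, …, n}` gives `n + 1 ≤ C · S (n + 1)`. Conversely, summation by parts writes
`∑ aₖ wₖ` as `∑ (aₖ - aₖ₊₁) S (k + 1)`, a combination with nonnegative coefficients of the partial
sums, so `S n ≥ c n` yields `∑ aₖ wₖ ≥ c ∑ (aₖ - aₖ₊₁) (k + 1) = c ∑ aₖ`. -/

open Finset

lemma tsum_eq_sum_range_of_eventually_zero {α : Type*} [AddCommMonoid α] [TopologicalSpace α]
    {a : ℕ → α} {N : ℕ} (ha : ∀ n ≥ N, a n = 0) :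
    ∑' n, a n = ∑ n ∈ range N, a n :=
  tsum_eq_sum fun n hn ↦ ha n (by simpa using hn)

lemma sum_range_mul_eq_summation_by_parts {R : Type*} [CommRing R] (a w : ℕ → R) (N : ℕ) :
    ∑ k ∈ range N, a k * w k =
      a N * ∑ k ∈ range N, w k + ∑ k ∈ range N, (a k - a (k + 1)) * ∑ j ∈ range (k + 1), w j := by
  induction N with
  | zero => simp
  | succ N ih =>
    rw [sum_range_succ (fun k ↦ a k * w k), ih,
      sum_range_succ (fun k ↦ (a k - a (k + 1)) * ∑ j ∈ range (k + 1), w j), sum_range_succ w N]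
    ring

lemma mul_sum_range_le_sum_range_mul {R : Type*} [CommRing R] [PartialOrder R] [IsOrderedRing R]
    {a w : ℕ → R} {c : R} (ha : Antitone a)
    (hc : ∀ n : ℕ, c * n ≤ ∑ k ∈ range n, w k) (N : ℕ) (haN : 0 ≤ a N) :
    c * ∑ k ∈ range N, a k ≤ ∑ k ∈ range N, a k * w k := by
  calc c * ∑ k ∈ range N, a k
      = c * ∑ k ∈ range N, a k * 1 := by simp
    _ = a N * (c * N) + ∑ k ∈ range N, (a k - a (k + 1)) * (c * (k + 1 : ℕ)) := by
      rw [sum_range_mul_eq_summation_by_parts]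
      simp only [sum_const, card_range, nsmul_eq_mul, mul_one]
      rw [mul_add, mul_sum]
      congr 1
      · ring
      · exact sum_congr rfl fun k _ ↦ by ring
    _ ≤ a N * ∑ k ∈ range N, w k +
          ∑ k ∈ range N, (a k - a (k + 1)) * ∑ j ∈ range (k + 1), w j := by
      gcongr with k
      · exact hc N
      · exact sub_nonneg.2 (ha k.le_succ)
      · exact hc (k + 1)
    _ = ∑ k ∈ range N, a k * w k := (sum_range_mul_eq_summation_by_parts a w N).symm

lemma succ_le_mul_sum_range_of_tsum_le {w : ℕ → ℝ} {C : ℝ}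
    (h : ∀ a : ℕ → ℝ, (∀ n, 0 ≤ a n) → Antitone a → (∃ N, ∀ n ≥ N, a n = 0) →
      ∑' n, a n ≤ C * ∑' n, a n * w n) (n : ℕ) :
    (n + 1 : ℝ) ≤ C * ∑ k ∈ range (n + 1), w k := by
  let a : ℕ → ℝ := fun k ↦ if k ≤ n then 1 else 0
  have hzero : ∀ k ≥ n + 1, a k = 0 := fun k hk ↦ if_neg (by omega)
  have hanti : Antitone a := fun i j hij ↦ by
    by_cases hj : j ≤ n
    · simp [a, hj, hij.trans hj]
    · by_cases hi : i ≤ n <;> simp [a, hi, hj]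
  have key := h a (fun k ↦ by by_cases hk : k ≤ n <;> simp [a, hk]) hanti ⟨n + 1, hzero⟩
  rw [tsum_eq_sum_range_of_eventually_zero hzero,
    tsum_eq_sum_range_of_eventually_zero fun k hk ↦ by rw [hzero k hk, zero_mul]] at key
  have hmem : ∀ k ∈ range (n + 1), a k = 1 := fun k hk ↦
    if_pos (by simpa [Nat.lt_succ_iff] using hk)
  have hsum_aw : ∑ k ∈ range (n + 1), a k * w k = ∑ k ∈ range (n + 1), w k :=
    sum_congr rfl fun k hk ↦ by rw [hmem k hk, one_mul]
  rwa [sum_congr rfl hmem, hsum_aw, sum_const, card_range, nsmul_one, Nat.cast_succ] at key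

/-- Indices start at `0`: `w n` is the paper's `w_{n+1}`, so `∑ k ∈ range (n + 1), w k` is
`s_{n+1}`. -/
theorem stmt7_general (w : ℕ → ℝ) :
    (∃ C > 0, ∀ a : ℕ → ℝ, (∀ n, 0 ≤ a n) → Antitone a →
        (∃ N, ∀ n ≥ N, a n = 0) →
        ∑' n, a n ≤ C * ∑' n, a n * w n) ↔
      ∃ c > 0, ∀ n : ℕ,
        c ≤ (∑ k ∈ Finset.range (n + 1), w k) / (n + 1) := by
  constructor
  · rintro ⟨C, hC, h⟩
    refine ⟨C⁻¹, inv_pos.2 hC, fun n ↦ ?_⟩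
    rw [le_div_iff₀ (by positivity), inv_mul_le_iff₀ hC]
    exact succ_le_mul_sum_range_of_tsum_le h n
  · rintro ⟨c, hc, h⟩
    have hc' : ∀ n : ℕ, c * n ≤ ∑ k ∈ range n, w k
      | 0 => by simp
      | n + 1 => by simpa [le_div_iff₀ (n.cast_add_one_pos (α := ℝ))] using h n
    refine ⟨c⁻¹, inv_pos.2 hc, fun a ha hanti ⟨N, hN⟩ ↦ ?_⟩
    rw [tsum_eq_sum_range_of_eventually_zero hN,
      tsum_eq_sum_range_of_eventually_zero fun k hk ↦ by rw [hN k hk, zero_mul], le_inv_mul_iff₀ hc]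
    exact mul_sum_range_le_sum_range_mul hanti hc' N (ha N)

/-- Proposition 6.2(c)(i): inclusion `d_{1,1}(w) ⊆ ℓ₁`.
Indices are shifted to start at `0`: `w n` is the weight `w_{n+1}` of the paper and
`s_{n+1} = ∑_{k ∈ range (n+1)} w k`; thus `s_n/n` becomes
`(∑ k ∈ range (n+1), w k)/(n+1)`.  The inclusion, expressed by
`∑ₙ aₙ ≤ C·∑ₙ aₙ·wₙ` for all admissible sequences, holds iff `infₙ sₙ/n > 0`. -/
theorem stmt7 (w : ℕ → ℝ) (hw : ∀ n, 0 ≤ w n) (hw0 : 0 < w 0) :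
    (∃ C > 0, ∀ a : ℕ → ℝ, (∀ n, 0 ≤ a n) → Antitone a →
        (∃ N, ∀ n ≥ N, a n = 0) →
        ∑' n, a n ≤ C * ∑' n, a n * w n) ↔
      ∃ c > 0, ∀ n : ℕ,
        c ≤ (∑ k ∈ Finset.range (n + 1), w k) / (n + 1) :=
  stmt7_general w
end

section
/- (Proposition 6.2(c)(ii) of the paper: strong absoluteness of the unit vector basis of d_{1,1}(w).) Let w be a weight with primitive weight (s_n) and suppose lim_{n→∞} s_n/n = ∞. Then for every R > 0 there exists a constant C > 0 such that every admissible sequence (a_n) satisfies ∑_n a_n ≤ max( C·a_1, (1/R)·∑_n a_n·w_n ). -/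
/-!
Write `a` as a superposition of the indicators of `{0, …, n}` with the nonnegative
coefficients `a n - a (n + 1)`. The indicator of `{0, …, n}` has `ℓ₁`-norm `n + 1` and
`d_{1,1}(w)`-norm `s_{n+1}`, so it suffices to bound `n + 1` by `K + s_{n+1} / (2R)`
uniformly in `n`: for large `n` this is `s_{n+1} / (n + 1) ≥ 2R`, and the finitely many
remaining `n` are absorbed into `K`. Summing gives `∑ aₙ ≤ K a₁ + (1 / 2R) ∑ aₙ wₙ`.
-/

open Finset Filter

theorem sum_range_mul_eq_sum_range_sub_mul_partialSum (a w : ℕ → ℝ) (M : ℕ) :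
    ∑ n ∈ range M, a n * w n =
      ∑ n ∈ range M, (a n - a (n + 1)) * ∑ k ∈ range (n + 1), w k +
        a M * ∑ k ∈ range M, w k := by
  induction M with
  | zero => simp
  | succ M ih =>
    rw [sum_range_succ, ih, sum_range_succ, sum_range_succ _ M]
    ring

theorem exists_add_le_add_div_of_tendsto {s : ℕ → ℝ} (hs : ∀ n, 0 ≤ s n)
    (hlim : Tendsto (fun n : ℕ => s n / (n + 1)) atTop atTop) {c : ℝ} (hc : 0 < c) :
    ∃ K > 0, ∀ n : ℕ, (n : ℝ) + 1 ≤ K + s n / c := by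
  obtain ⟨N, hN⟩ := eventually_atTop.mp (hlim.eventually_ge_atTop c)
  refine ⟨N + 1, by positivity, fun n => ?_⟩
  have hsc : 0 ≤ s n / c := div_nonneg (hs n) hc.le
  rcases lt_or_ge n N with hn | hn
  · have : (n : ℝ) ≤ N := by exact_mod_cast hn.le
    linarith
  · have h := hN n hn
    rw [le_div_iff₀ (by positivity), ← le_div_iff₀' hc] at h
    linarith

theorem tsum_le_mul_add_div_tsum_mul_of_antitone {a w : ℕ → ℝ} (ha : Antitone a) {M : ℕ}
    (haM : ∀ n ≥ M, a n = 0) {K c : ℝ}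
    (hK : ∀ n : ℕ, (n : ℝ) + 1 ≤ K + (∑ k ∈ range (n + 1), w k) / c) :
    ∑' n, a n ≤ K * a 0 + (1 / c) * ∑' n, a n * w n := by
  have hlayer (f : ℕ → ℝ) : ∑' n, a n * f n =
      ∑ n ∈ range M, (a n - a (n + 1)) * ∑ k ∈ range (n + 1), f k := by
    rw [tsum_eq_sum (s := range M) fun n hn => by rw [haM n (by simpa using hn), zero_mul],
      sum_range_mul_eq_sum_range_sub_mul_partialSum, haM M le_rfl, zero_mul, add_zero]
  have hl1 := hlayer fun _ => 1
  simp only [mul_one, sum_const, card_range, nsmul_eq_mul, Nat.cast_succ] at hl1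
  have htelescope : ∑ n ∈ range M, (a n - a (n + 1)) = a 0 := by
    rw [sum_range_sub', haM M le_rfl, sub_zero]
  calc ∑' n, a n
      = ∑ n ∈ range M, (a n - a (n + 1)) * ((n : ℝ) + 1) := hl1
    _ ≤ ∑ n ∈ range M, (a n - a (n + 1)) * (K + (∑ k ∈ range (n + 1), w k) / c) :=
        sum_le_sum fun n _ => mul_le_mul_of_nonneg_left (hK n)
          (sub_nonneg.2 (ha n.le_succ))
    _ = K * a 0 + (1 / c) * ∑' n, a n * w n := by
        rw [hlayer, ← htelescope, mul_sum, mul_sum, ← sum_add_distrib]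
        exact sum_congr rfl fun n _ => by ring

theorem stmt8_general (w : ℕ → ℝ) (hw : ∀ n, 0 ≤ w n)
    (hlim : Filter.Tendsto
      (fun n : ℕ => (∑ k ∈ Finset.range (n + 1), w k) / (n + 1))
      Filter.atTop Filter.atTop) :
    ∀ R : ℝ, 0 < R → ∃ C > 0, ∀ a : ℕ → ℝ,
      (∀ n, 0 ≤ a n) → Antitone a → (∃ N, ∀ n ≥ N, a n = 0) →
      ∑' n, a n ≤ max (C * a 0) ((1 / R) * ∑' n, a n * w n) := by
  intro R hR
  obtain ⟨K, hK, hbound⟩ := exists_add_le_add_div_of_tendsto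
    (fun n => sum_nonneg fun k _ => hw k) hlim (mul_pos two_pos hR)
  refine ⟨2 * K, mul_pos two_pos hK, fun a _ ha ⟨N, haN⟩ => ?_⟩
  calc ∑' n, a n ≤ K * a 0 + 1 / (2 * R) * ∑' n, a n * w n :=
        tsum_le_mul_add_div_tsum_mul_of_antitone ha haN hbound
    _ = (2 * K * a 0 + 1 / R * ∑' n, a n * w n) / 2 := by field_simp
    _ ≤ max (2 * K * a 0) (1 / R * ∑' n, a n * w n) := by
        rw [div_le_iff₀ two_pos]
        linarith [le_max_left (2 * K * a 0) (1 / R * ∑' n, a n * w n),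
          le_max_right (2 * K * a 0) (1 / R * ∑' n, a n * w n)]

/-- Proposition 6.2(c)(ii): strong absoluteness of the unit vector
basis of `d_{1,1}(w)`.  Indices are shifted to start at `0`: `w n` is the weight
`w_{n+1}` of the paper and `s_{n+1} = ∑_{k ∈ range (n+1)} w k`.  If `sₙ/n → ∞`
then for every `R > 0` there is `C > 0` such that every admissible sequence `a`
satisfies `∑ₙ aₙ ≤ max (C·a₁) ((1/R)·∑ₙ aₙ·wₙ)`. -/
theorem stmt8 (w : ℕ → ℝ) (hw : ∀ n, 0 ≤ w n) (hw0 : 0 < w 0)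
    (hlim : Filter.Tendsto
      (fun n : ℕ => (∑ k ∈ Finset.range (n + 1), w k) / (n + 1))
      Filter.atTop Filter.atTop) :
    ∀ R : ℝ, 0 < R → ∃ C > 0, ∀ a : ℕ → ℝ,
      (∀ n, 0 ≤ a n) → Antitone a → (∃ N, ∀ n ≥ N, a n = 0) →
      ∑' n, a n ≤ max (C * a 0) ((1 / R) * ∑' n, a n * w n) :=
  stmt8_general w hw hlim
end

section
/- Let Φ : {1,2,3,…} → (0,∞) be nondecreasing and have the upper regularity property: there is an integer r ≥ 2 with Φ(r·n) ≤ (r/2)·Φ(n) for all n ≥ 1. Then there exists a constant C > 0 (one may take C = r) such that ∑_{n=1}^m 1/Φ(n) ≤ C·m/Φ(m) for every m ≥ 1. -/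
/-!
Strong induction on `m` with the constant `r ^ 2`. For `m > r` split `∑_{n ≤ m} 1/Φ n` at
`k = ⌊m/r⌋ + 1 < m`: the head is `≤ r² k / Φ k` by induction, each of the `m - k` tail terms is
`≤ 1 / Φ k` by monotonicity, and `m ≤ r k` gives `Φ m ≤ (r/2) Φ k` by upper regularity. Since
`r k ≤ m + r`, this yields `(r² k + (m - k)) · r/2 ≤ r² m`, closing the induction.
For `m ≤ r` the same comparison is made with `k = 0`, using `Φ m ≤ (r/2) Φ 1`.
-/

open Finset

lemma div_le_div_of_le_mul_of_mul_le {a b c x y : ℝ} (ha : 0 ≤ a) (hx : 0 < x) (hy : 0 < y)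
    (hyx : y ≤ c * x) (hac : a * c ≤ b) : a / x ≤ b / y := by
  rw [div_le_div_iff₀ hx hy]
  calc a * y ≤ a * (c * x) := mul_le_mul_of_nonneg_left hyx ha
    _ = a * c * x := by ring
    _ ≤ b * x := mul_le_mul_of_nonneg_right hac hx.le

lemma sq_mul_add_sub_mul_half_le {r k m : ℝ} (hr : 2 ≤ r) (hk : 1 ≤ k) (hrk : r * k ≤ m + r)
    (hm : r + 1 ≤ m) : (r ^ 2 * k + (m - k)) * (r / 2) ≤ r ^ 2 * m := by
  nlinarith [mul_le_mul_of_nonneg_left hrk (by positivity : (0 : ℝ) ≤ r),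
    mul_le_mul_of_nonneg_left hm (by linarith : (0 : ℝ) ≤ r - 1)]

section UpperRegular

variable {Φ : ℕ → ℝ} (hpos : ∀ n, 1 ≤ n → 0 < Φ n) (hmono : MonotoneOn Φ (Set.Ici 1))
include hpos hmono

lemma sum_Ioc_one_div_le {j k : ℕ} (hj : 1 ≤ j) (hjk : j ≤ k + 1) (m : ℕ) :
    ∑ n ∈ Ioc k m, 1 / Φ n ≤ (m - k : ℕ) / Φ j := by
  calc ∑ n ∈ Ioc k m, 1 / Φ n ≤ #(Ioc k m) • (1 / Φ j) := by
        refine sum_le_card_nsmul _ _ _ fun n hn => ?_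
        have hjn : j ≤ n := hjk.trans (mem_Ioc.mp hn).1
        exact one_div_le_one_div_of_le (hpos j hj) (hmono hj (hj.trans hjn) hjn)
    _ = (m - k : ℕ) / Φ j := by rw [Nat.card_Ioc, nsmul_eq_mul, mul_one_div]

omit hpos in
lemma le_half_mul_of_le_mul {r : ℕ} (hURP : ∀ n, 1 ≤ n → Φ (r * n) ≤ (r / 2 : ℝ) * Φ n)
    {j m : ℕ} (hj : 1 ≤ j) (hm : 1 ≤ m) (hmj : m ≤ r * j) : Φ m ≤ (r / 2 : ℝ) * Φ j :=
  (hmono hm (hm.trans hmj) hmj).trans (hURP j hj)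

lemma sum_Ioc_one_div_le_sq_mul_div {r : ℕ} (hr : 2 ≤ r)
    (hURP : ∀ n, 1 ≤ n → Φ (r * n) ≤ (r / 2 : ℝ) * Φ n) :
    ∀ m, 1 ≤ m → ∑ n ∈ Ioc 0 m, 1 / Φ n ≤ r ^ 2 * m / Φ m := by
  have hr' : (2 : ℝ) ≤ r := by exact_mod_cast hr
  intro m
  induction m using Nat.strong_induction_on with
  | _ m ih =>
  intro hm
  rcases le_or_gt m r with hmr | hrm
  · refine (sum_Ioc_one_div_le hpos hmono le_rfl le_rfl m).trans ?_
    refine div_le_div_of_le_mul_of_mul_le (by positivity) (hpos 1 le_rfl) (hpos m hm)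
      (le_half_mul_of_le_mul hmono hURP le_rfl hm (by omega)) ?_
    rw [Nat.sub_zero]
    have hr2 : (r / 2 : ℝ) ≤ r ^ 2 := by nlinarith
    nlinarith [mul_le_mul_of_nonneg_left hr2 m.cast_nonneg]
  · set k := m / r + 1
    have hk : 1 ≤ k := Nat.le_add_left 1 _
    have hrk : r * k ≤ m + r := by rw [mul_add, mul_one]; linarith [Nat.mul_div_le m r]
    have hkm : k < m := by nlinarith
    have hmk : m ≤ r * k := (Nat.lt_mul_div_succ m (by omega)).le
    rw [← sum_Ioc_consecutive _ (Nat.zero_le k) hkm.le]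
    refine (add_le_add (ih k hkm hk) (sum_Ioc_one_div_le hpos hmono hk k.le_succ m)).trans ?_
    rw [← add_div]
    refine div_le_div_of_le_mul_of_mul_le (by positivity) (hpos k hk) (hpos m hm)
      (le_half_mul_of_le_mul hmono hURP hk hm hmk) ?_
    rw [Nat.cast_sub hkm.le]
    exact sq_mul_add_sub_mul_half_le hr' (by exact_mod_cast hk) (by exact_mod_cast hrk)
      (by exact_mod_cast hrm)

end UpperRegular

/-- if `Φ : {1,2,…} → (0,∞)` is nondecreasing and has the upper
regularity property (`Φ(r·n) ≤ (r/2)·Φ(n)` for some integer `r ≥ 2`), then there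
is `C > 0` with `∑_{n=1}^m 1/Φ(n) ≤ C·m/Φ(m)` for every `m ≥ 1`. -/
theorem stmt10 (Φ : ℕ → ℝ) (hpos : ∀ n, 1 ≤ n → 0 < Φ n)
    (hmono : ∀ m n, 1 ≤ m → m ≤ n → Φ m ≤ Φ n)
    (r : ℕ) (hr : 2 ≤ r)
    (hURP : ∀ n, 1 ≤ n → Φ (r * n) ≤ ((r : ℝ) / 2) * Φ n) :
    ∃ C > 0, ∀ m : ℕ, 1 ≤ m →
      ∑ n ∈ Finset.Icc 1 m, 1 / Φ n ≤ C * m / Φ m := by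
  have hmono' : MonotoneOn Φ (Set.Ici 1) := fun m hm n _ hmn => hmono m n hm hmn
  exact ⟨r ^ 2, by positivity, sum_Ioc_one_div_le_sq_mul_div hpos hmono' hr hURP⟩
end

section
/- Let Φ : {1,2,3,…} → (0,∞) be nondecreasing and have the lower regularity property: there is an integer r ≥ 2 with Φ(r·n) ≥ 2·Φ(n) for all n ≥ 1. Then there exists a constant C > 0 such that ∑_{n=1}^m Φ(n)/n ≤ C·Φ(m) for every m ≥ 1. -/
/-!
Split `∑_{n ≤ m} Φ(n)/n` at `k = ⌊m/r⌋`. On the tail `k < n ≤ m` every term is at most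
`Φ(m)/(k+1)` and there are fewer than `r(k+1)` terms, so the tail is at most `r Φ(m)`.
By induction the head is at most `2r Φ(k) ≤ r Φ(rk) ≤ r Φ(m)`, which closes the induction
with `C = 2r`.
-/

open Finset

section

variable (Φ : ℕ → ℝ) (hmono : ∀ m n, 1 ≤ m → m ≤ n → Φ m ≤ Φ n)
include hmono

theorem sum_Ioc_div_le_div_mul (hnonneg : ∀ n, 1 ≤ n → 0 ≤ Φ n) {k m : ℕ} (hkm : k < m) :
    ∑ n ∈ Ioc k m, Φ n / n ≤ m / (k + 1) * Φ m := by
  have hterm : ∀ n ∈ Ioc k m, Φ n / n ≤ Φ m / (k + 1) := fun n hn => by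
    obtain ⟨hkn, hnm⟩ := mem_Ioc.mp hn
    exact div_le_div₀ (hnonneg m (by omega)) (hmono n m (by omega) hnm) (by positivity)
      (by exact_mod_cast hkn)
  calc ∑ n ∈ Ioc k m, Φ n / n
      ≤ (Ioc k m).card • (Φ m / (k + 1)) := sum_le_card_nsmul _ _ _ hterm
    _ = ((m - k : ℕ) : ℝ) * (Φ m / (k + 1)) := by rw [Nat.card_Ioc, nsmul_eq_mul]
    _ ≤ m * (Φ m / (k + 1)) := by
        gcongr
        · exact div_nonneg (hnonneg m (by omega)) (by positivity)
        · exact Nat.sub_le m k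
    _ = m / (k + 1) * Φ m := by ring

theorem sum_Icc_div_le_two_mul_mul (hnonneg : ∀ n, 1 ≤ n → 0 ≤ Φ n) (r : ℕ) (hr : 2 ≤ r)
    (hLRP : ∀ n, 1 ≤ n → 2 * Φ n ≤ Φ (r * n)) (m : ℕ) (hm : 1 ≤ m) :
    ∑ n ∈ Icc 1 m, Φ n / n ≤ 2 * r * Φ m := by
  induction m using Nat.strong_induction_on with
  | _ m ih =>
  set k := m / r
  have hkm : k < m := Nat.div_lt_self hm hr
  have hrk : r * k ≤ m := Nat.mul_div_le m r
  have hhead : ∑ n ∈ Ioc 0 k, Φ n / n ≤ r * Φ m := by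
    rcases Nat.eq_zero_or_pos k with hk | hk
    · rw [hk, Ioc_self, sum_empty]
      exact mul_nonneg (by positivity) (hnonneg m hm)
    calc ∑ n ∈ Ioc 0 k, Φ n / n
        ≤ 2 * r * Φ k := ih k hkm hk
      _ = r * (2 * Φ k) := by ring
      _ ≤ r * Φ (r * k) := by gcongr; exact hLRP k hk
      _ ≤ r * Φ m := by gcongr; exact hmono _ _ (by nlinarith) hrk
  have htail : ∑ n ∈ Ioc k m, Φ n / n ≤ r * Φ m := by
    have hmk : (m : ℝ) < r * (k + 1) := by exact_mod_cast Nat.lt_mul_div_succ m (by omega)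
    calc ∑ n ∈ Ioc k m, Φ n / n
        ≤ m / (k + 1) * Φ m := sum_Ioc_div_le_div_mul Φ hmono hnonneg hkm
      _ ≤ r * Φ m := by
          gcongr
          · exact hnonneg m hm
          · rw [div_le_iff₀ (by positivity)]; exact hmk.le
  calc ∑ n ∈ Icc 1 m, Φ n / n
      = ∑ n ∈ Ioc 0 k, Φ n / n + ∑ n ∈ Ioc k m, Φ n / n := by
        rw [sum_Ioc_consecutive _ k.zero_le hkm.le, ← Icc_add_one_left_eq_Ioc, zero_add]
    _ ≤ 2 * r * Φ m := by linarith

end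

/-- if `Φ : {1,2,…} → (0,∞)` is nondecreasing and has the lower
regularity property (`Φ(r·n) ≥ 2·Φ(n)` for some integer `r ≥ 2`), then there is
`C > 0` with `∑_{n=1}^m Φ(n)/n ≤ C·Φ(m)` for every `m ≥ 1`. -/
theorem stmt11 (Φ : ℕ → ℝ) (hpos : ∀ n, 1 ≤ n → 0 < Φ n)
    (hmono : ∀ m n, 1 ≤ m → m ≤ n → Φ m ≤ Φ n)
    (r : ℕ) (hr : 2 ≤ r)
    (hLRP : ∀ n, 1 ≤ n → 2 * Φ n ≤ Φ (r * n)) :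
    ∃ C > 0, ∀ m : ℕ, 1 ≤ m →
      ∑ n ∈ Finset.Icc 1 m, Φ n / (n : ℝ) ≤ C * Φ m :=
  ⟨2 * r, by positivity, sum_Icc_div_le_two_mul_mul Φ hmono (fun n hn => (hpos n hn).le) r hr hLRP⟩
end

section
/- (Lemma 6.6 of the paper: q-concavity forces the lower democracy function to have the LRP.) Let 0 < q < ∞ and C ≥ 1, and let N assign to each finite subset A of ℕ a nonnegative real number such that for every finite family A₁, …, A_r of pairwise disjoint finite subsets of ℕ one has ∑_{j=1}^r N(A_j)^q ≤ C^q·N(A₁ ∪ ⋯ ∪ A_r)^q. Define φ(m) = inf{ N(A) : A ⊆ ℕ finite, |A| ≥ m }. Then for every integer r ≥ (2C)^q and every m ≥ 1, φ(r·m) ≥ 2·φ(m). (For a q-concave sequence space L, N(A) = ‖1_A‖_L and φ is its lower democracy function; the conclusion says φ has the lower regularity property.) -/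
/-!
Split a set `A` with `|A| ≥ r m` into `r` pairwise disjoint pieces of size at least `m`.
Each piece has `N ≥ φ(m)`, so `q`-concavity gives `r φ(m)^q ≤ C^q N(A)^q`, and
`r ≥ (2C)^q = 2^q C^q` turns this into `(2 φ(m))^q ≤ N(A)^q`.
-/

open Finset Function

theorem Fin.pairwise_disjoint_cons {β : Type*} [PartialOrder β] [OrderBot β] {n : ℕ} {a : β}
    {f : Fin n → β} (ha : ∀ i, Disjoint a (f i)) (hf : Pairwise (Disjoint on f)) :
    Pairwise (Disjoint on (Fin.cons a f : Fin (n + 1) → β)) := by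
  intro i j hij
  cases i using Fin.cases <;> cases j using Fin.cases
  · exact absurd rfl hij
  · exact ha _
  · exact (ha _).symm
  · exact hf (ne_of_apply_ne Fin.succ hij)

variable {α : Type*}

theorem Finset.biUnion_fin_cons [DecidableEq α] {n : ℕ} (t : Finset α)
    (f : Fin n → Finset α) :
    univ.biUnion (Fin.cons t f : Fin (n + 1) → Finset α) = t ∪ univ.biUnion f := by
  ext x
  simp [Fin.exists_fin_succ]

theorem Finset.exists_partition_fin_succ_card_ge [DecidableEq α] (m : ℕ) :
    ∀ (r : ℕ) (s : Finset α), (r + 1) * m ≤ s.card →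
      ∃ f : Fin (r + 1) → Finset α,
        Pairwise (Disjoint on f) ∧ univ.biUnion f = s ∧ ∀ i, m ≤ (f i).card
  | 0, s, hs =>
    ⟨fun _ => s, fun i j hij => absurd (Subsingleton.elim (α := Fin 1) i j) hij, by simp,
      fun _ => by simpa using hs⟩
  | r + 1, s, hs => by
    obtain ⟨t, hts, htm⟩ := exists_subset_card_eq (show m ≤ s.card by nlinarith)
    obtain ⟨f, hf_disj, hf_union, hf_card⟩ :=
      exists_partition_fin_succ_card_ge m r (s \ t) (by rw [card_sdiff_of_subset hts]; lia)
    refine ⟨Fin.cons t f, Fin.pairwise_disjoint_cons ?_ hf_disj, ?_, Fin.cases htm.ge hf_card⟩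
    · exact fun i => disjoint_sdiff.mono_right (hf_union ▸ subset_biUnion_of_mem f (mem_univ i))
    · rw [biUnion_fin_cons, hf_union, union_sdiff_of_subset hts]

noncomputable def lowerDemocracy (N : Finset α → ℝ) (m : ℕ) : ℝ :=
  sInf {x | ∃ A : Finset α, m ≤ A.card ∧ x = N A}

variable {N : Finset α → ℝ} {q C : ℝ}

theorem lowerDemocracy_nonneg (hN0 : ∀ A, 0 ≤ N A) (m : ℕ) : 0 ≤ lowerDemocracy N m :=
  Real.sInf_nonneg fun _ ⟨A, _, hx⟩ => hx ▸ hN0 A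

theorem lowerDemocracy_le (hN0 : ∀ A, 0 ≤ N A) {m : ℕ} {A : Finset α} (hA : m ≤ A.card) :
    lowerDemocracy N m ≤ N A :=
  csInf_le ⟨0, fun _ ⟨B, _, hx⟩ => hx ▸ hN0 B⟩ ⟨A, hA, rfl⟩

theorem mul_lowerDemocracy_rpow_le [DecidableEq α] (hq : 0 ≤ q) (hN0 : ∀ A, 0 ≤ N A)
    (hconc : ∀ (k : ℕ) (A : Fin k → Finset α), Pairwise (Disjoint on A) →
      ∑ j, N (A j) ^ q ≤ C ^ q * N (univ.biUnion A) ^ q)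
    {r m : ℕ} (hr : 0 < r) {A : Finset α} (hA : r * m ≤ A.card) :
    r * lowerDemocracy N m ^ q ≤ C ^ q * N A ^ q := by
  obtain ⟨k, rfl⟩ := Nat.exists_eq_add_one_of_ne_zero hr.ne'
  obtain ⟨f, hf_disj, hf_union, hf_card⟩ := exists_partition_fin_succ_card_ge m k A hA
  calc ((k + 1 : ℕ) : ℝ) * lowerDemocracy N m ^ q
        = ∑ _j : Fin (k + 1), lowerDemocracy N m ^ q := by simp
    _ ≤ ∑ j, N (f j) ^ q := sum_le_sum fun j _ =>
        Real.rpow_le_rpow (lowerDemocracy_nonneg hN0 m) (lowerDemocracy_le hN0 (hf_card j)) hq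
    _ ≤ C ^ q * N A ^ q := hf_union ▸ hconc _ f hf_disj

theorem two_mul_lowerDemocracy_le [DecidableEq α] (hq : 0 < q) (hC : 0 < C)
    (hN0 : ∀ A, 0 ≤ N A)
    (hconc : ∀ (k : ℕ) (A : Fin k → Finset α), Pairwise (Disjoint on A) →
      ∑ j, N (A j) ^ q ≤ C ^ q * N (univ.biUnion A) ^ q)
    {r m : ℕ} (hr : (2 * C) ^ q ≤ r) {A : Finset α} (hA : r * m ≤ A.card) :
    2 * lowerDemocracy N m ≤ N A := by
  have hφ := lowerDemocracy_nonneg hN0 m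
  have hr_pos : 0 < r := by exact_mod_cast (Real.rpow_pos_of_pos (by positivity) q).trans_le hr
  have hCq : 0 < C ^ q := Real.rpow_pos_of_pos hC q
  have : C ^ q * (2 * lowerDemocracy N m) ^ q ≤ C ^ q * N A ^ q := calc
    C ^ q * (2 * lowerDemocracy N m) ^ q = (2 * C) ^ q * lowerDemocracy N m ^ q := by
      rw [Real.mul_rpow zero_le_two hφ, Real.mul_rpow zero_le_two hC.le]; ring
    _ ≤ r * lowerDemocracy N m ^ q := by gcongr
    _ ≤ C ^ q * N A ^ q := mul_lowerDemocracy_rpow_le hq.le hN0 hconc hr_pos hA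
  exact (Real.rpow_le_rpow_iff (by positivity) (hN0 A) hq).mp (le_of_mul_le_mul_left this hCq)

/-- Lemma 6.6: if `N` assigns nonnegative values to finite subsets of
`ℕ` and satisfies the `q`-concavity inequality
`∑ⱼ N(Aⱼ)^q ≤ C^q·N(A₁ ∪ ⋯ ∪ A_r)^q` for pairwise disjoint finite sets, then the
lower democracy function `φ(m) = inf {N A : |A| ≥ m}` satisfies `φ(r·m) ≥ 2·φ(m)`
for every integer `r ≥ (2C)^q` and every `m ≥ 1` (the lower regularity property). -/
theorem stmt12 (q C : ℝ) (hq : 0 < q) (hC : 1 ≤ C)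
    (N : Finset ℕ → ℝ) (hN0 : ∀ A, 0 ≤ N A)
    (hconc : ∀ (k : ℕ) (A : Fin k → Finset ℕ),
      (∀ i j, i ≠ j → Disjoint (A i) (A j)) →
      ∑ j, N (A j) ^ q ≤ C ^ q * N (Finset.univ.biUnion A) ^ q) :
    ∀ r : ℕ, (2 * C) ^ q ≤ (r : ℝ) → ∀ m : ℕ, 1 ≤ m →
      2 * sInf {x | ∃ A : Finset ℕ, m ≤ A.card ∧ x = N A} ≤
        sInf {x | ∃ A : Finset ℕ, r * m ≤ A.card ∧ x = N A} := by
  intro r hr m _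
  refine le_csInf ⟨_, range (r * m), by simp, rfl⟩ fun _ ⟨A, hA, hx⟩ => hx ▸ ?_
  exact two_mul_lowerDemocracy_le hq (by linarith) hN0 (fun k A hA => hconc k A fun _ _ => @hA _ _)
    hr hA
end

section
/- (Proposition 6.7 of the paper, case 1 < q < ∞.) Let 1 < q < ∞ with conjugate exponent q′ = q/(q−1). Let N be a normalized K-unconditional coefficient quasi-norm that is q-concave with constant C, and set s_m = inf{ N(1_A) : A ⊆ ℕ finite, |A| ≥ m } for m ≥ 1 (the lower democracy function). If ∑_{m=1}^∞ m^{q′−1}/s_m^{q′} < ∞, then N is strongly absolute: for every R > 0 there exists C′ > 0 such that every finitely supported f : ℕ → ℝ satisfies ‖f‖₁ ≤ max( C′·‖f‖_∞, N(f)/R ). -/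
/-- The lower democracy function: `s_m = inf {N(1_A) : A ⊆ ℕ finite, |A| ≥ m}`. -/
noncomputable def lowerDem (N : (ℕ →₀ ℝ) → ℝ) (m : ℕ) : ℝ :=
  sInf {x | ∃ A : Finset ℕ, m ≤ A.card ∧ x = N (∑ n ∈ A, Finsupp.single n 1)}

open Finset

lemma sum_single_one_apply (A : Finset ℕ) (n : ℕ) :
    (∑ m ∈ A, Finsupp.single m (1 : ℝ)) n = if n ∈ A then 1 else 0 := by
  simp [Finsupp.finsetSum_apply, Finsupp.single_apply]

section LowerDemocracy

variable {K : ℝ} {N : (ℕ →₀ ℝ) → ℝ}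

lemma lowerDem_le (hN : 0 ≤ N) {m : ℕ} {A : Finset ℕ} (hA : m ≤ #A) :
    lowerDem N m ≤ N (∑ n ∈ A, Finsupp.single n 1) :=
  csInf_le ⟨0, by rintro x ⟨B, -, rfl⟩; exact hN _⟩ ⟨A, hA, rfl⟩

lemma lowerDem_mono (hN : 0 ≤ N) : Monotone (lowerDem N) := by
  intro m m' hm
  refine le_csInf ⟨_, range m', by simp, rfl⟩ ?_
  rintro x ⟨A, hA, rfl⟩
  exact lowerDem_le hN (hm.trans hA)

lemma lowerDem_nonneg (hN : 0 ≤ N) (m : ℕ) : 0 ≤ lowerDem N m :=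
  Real.sInf_nonneg (by rintro x ⟨A, -, rfl⟩; exact hN _)

lemma inv_le_lowerDem (hN : IsCoeffQuasiNorm K N) (hK : 0 < K) {m : ℕ} (hm : 1 ≤ m) :
    K⁻¹ ≤ lowerDem N m := by
  refine le_csInf ⟨_, range m, by simp, rfl⟩ ?_
  rintro x ⟨A, hA, rfl⟩
  obtain ⟨n, hn⟩ := card_pos.1 (hm.trans hA)
  have h : N (Finsupp.single n 1) ≤ K * N (∑ n ∈ A, Finsupp.single n 1) :=
    hN.uncond _ _ fun n' => by
      rw [sum_single_one_apply, Finsupp.single_apply]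
      split_ifs <;> simp_all
  rw [hN.normalized] at h
  rwa [inv_le_iff_one_le_mul₀' hK]

lemma lowerDem_pos (hN : IsCoeffQuasiNorm K N) (hK : 0 < K) {m : ℕ} (hm : 1 ≤ m) :
    0 < lowerDem N m :=
  (inv_pos.2 hK).trans_le (inv_le_lowerDem hN hK hm)

end LowerDemocracy

def IsQConcave (q C : ℝ) (N : (ℕ →₀ ℝ) → ℝ) : Prop :=
  ∀ (k : ℕ) (f : Fin k → (ℕ →₀ ℝ)),
    (∀ i j, i ≠ j → Disjoint (f i).support (f j).support) →
    (∑ i, N (f i) ^ q) ^ (1 / q) ≤ C * N (∑ i, f i)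

namespace IsQConcave

variable {q C K : ℝ} {N : (ℕ →₀ ℝ) → ℝ}

lemma sum_rpow_le (hconc : IsQConcave q C N) (hN : 0 ≤ N) (hq : 0 < q) {ι : Type*}
    (s : Finset ι) (g : ι → ℕ →₀ ℝ) (hg : (s : Set ι).PairwiseDisjoint fun i => (g i).support) :
    ∑ i ∈ s, N (g i) ^ q ≤ (C * N (∑ i ∈ s, g i)) ^ q := by
  have reindex : ∀ {M : Type} [AddCommMonoid M] (φ : ι → M),
      ∑ k, φ (s.equivFin.symm k) = ∑ i ∈ s, φ i := fun φ =>
    (Equiv.sum_comp s.equivFin.symm fun i : s => φ i).trans (sum_coe_sort s φ)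
  have h := hconc #s (fun k => g (s.equivFin.symm k)) fun k l hkl =>
    hg (s.equivFin.symm k).2 (s.equivFin.symm l).2
      fun h => hkl (s.equivFin.symm.injective (Subtype.ext h))
  rw [reindex (fun i => N (g i) ^ q), reindex g, one_div] at h
  have hsum : 0 ≤ ∑ i ∈ s, N (g i) ^ q := sum_nonneg fun i _ => Real.rpow_nonneg (hN _) q
  exact (Real.rpow_inv_le_iff_of_pos hsum ((Real.rpow_nonneg hsum _).trans h) hq).1 h

lemma sum_rpow_mul_le (hconc : IsQConcave q C N) (hN : IsCoeffQuasiNorm K N) (hq : 0 < q)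
    (hC : 0 ≤ C) {ι : Type*} (s : Finset ι) (B : ι → Finset ℕ) (t : ι → ℝ)
    (ht : ∀ i ∈ s, 0 ≤ t i) (hB : (s : Set ι).PairwiseDisjoint B) (f : ℕ →₀ ℝ)
    (hf : ∀ i ∈ s, ∀ n ∈ B i, t i ≤ |f n|) :
    ∑ i ∈ s, (t i * N (∑ n ∈ B i, Finsupp.single n 1)) ^ q ≤ (C * (K * N f)) ^ q := by
  set g : ι → ℕ →₀ ℝ := fun i => t i • ∑ n ∈ B i, Finsupp.single n 1
  have hg_apply : ∀ i n, g i n = if n ∈ B i then t i else 0 := fun i n => by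
    simp only [g, Finsupp.smul_apply, sum_single_one_apply, smul_eq_mul, mul_ite, mul_one,
      mul_zero]
  have hg_supp : ∀ i, (g i).support ⊆ B i := fun i n hn => by
    by_contra h
    simp [Finsupp.mem_support_iff, hg_apply, h] at hn
  have hsum_le : ∀ n, |(∑ i ∈ s, g i) n| ≤ |f n| := fun n => by
    rw [Finsupp.finsetSum_apply]
    by_cases hn : ∃ i ∈ s, n ∈ B i
    · obtain ⟨i, hi, hni⟩ := hn
      rw [sum_eq_single_of_mem i hi fun j hj hji => by
        rw [hg_apply, if_neg fun hnj => Finset.disjoint_left.1 (hB hj hi hji) hnj hni],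
        hg_apply, if_pos hni, abs_of_nonneg (ht i hi)]
      exact hf i hi n hni
    · simp only [not_exists, not_and] at hn
      rw [sum_eq_zero fun i hi => by rw [hg_apply, if_neg (hn i hi)], abs_zero]
      exact abs_nonneg _
  calc ∑ i ∈ s, (t i * N (∑ n ∈ B i, Finsupp.single n 1)) ^ q
      = ∑ i ∈ s, N (g i) ^ q :=
        sum_congr rfl fun i hi => by rw [hN.smul, abs_of_nonneg (ht i hi)]
    _ ≤ (C * N (∑ i ∈ s, g i)) ^ q :=
        hconc.sum_rpow_le hN.nonneg hq s g (hB.mono_on fun i _ => hg_supp i)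
    _ ≤ (C * (K * N f)) ^ q := by
        gcongr
        · exact mul_nonneg hC (hN.nonneg _)
        · exact hN.uncond _ _ hsum_le

end IsQConcave

section Rearrangement

variable (f : ℕ →₀ ℝ)

noncomputable def sortedSupport : List ℕ :=
  f.support.toList.mergeSort fun m n => decide (|f n| ≤ |f m|)

noncomputable def rearrangement (i : ℕ) : ℝ :=
  ((sortedSupport f).map fun n => |f n|).getD i 0

lemma length_sortedSupport : (sortedSupport f).length = #f.support := by
  simp [sortedSupport]

lemma nodup_sortedSupport : (sortedSupport f).Nodup :=
  (List.mergeSort_perm _ _).nodup_iff.2 f.support.nodup_toList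

lemma pairwise_sortedSupport : (sortedSupport f).Pairwise fun m n => |f n| ≤ |f m| :=
  (List.pairwise_mergeSort (fun a b c hab hbc => by simp_all only [decide_eq_true_eq]; linarith)
    (fun a b => by simpa using le_total _ _) _).imp (by simp)

lemma rearrangement_of_lt {i : ℕ} (hi : i < #f.support) :
    rearrangement f i = |f ((sortedSupport f)[i]'((length_sortedSupport f).symm ▸ hi))| := by
  simp [rearrangement, length_sortedSupport, hi]

lemma rearrangement_of_le {i : ℕ} (hi : #f.support ≤ i) : rearrangement f i = 0 :=
  List.getD_eq_default _ _ (by simpa [length_sortedSupport] using hi)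

lemma rearrangement_nonneg (i : ℕ) : 0 ≤ rearrangement f i := by
  rcases lt_or_ge i #f.support with hi | hi
  · rw [rearrangement_of_lt f hi]; exact abs_nonneg _
  · rw [rearrangement_of_le f hi]

lemma rearrangement_antitone : Antitone (rearrangement f) := by
  intro i j hij
  rcases lt_or_ge j #f.support with hj | hj
  · rw [rearrangement_of_lt f hj, rearrangement_of_lt f (hij.trans_lt hj)]
    rcases hij.lt_or_eq with hlt | rfl
    · exact (pairwise_sortedSupport f).rel_get_of_lt (a := ⟨i, _⟩) (b := ⟨j, _⟩) hlt
    · rfl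
  · rw [rearrangement_of_le f hj]; exact rearrangement_nonneg f i

lemma sum_range_rearrangement :
    ∑ i ∈ range #f.support, rearrangement f i = ∑ n ∈ f.support, |f n| := by
  rw [← length_sortedSupport, ← Fin.sum_univ_eq_sum_range]
  calc ∑ i : Fin (sortedSupport f).length, rearrangement f i
      = ∑ i : Fin (sortedSupport f).length, |f (sortedSupport f)[i.1]| :=
        Fintype.sum_congr _ _ fun i => by simp [rearrangement]
    _ = ((sortedSupport f).map fun n => |f n|).sum := Fin.sum_univ_fun_getElem _ fun n => |f n|
    _ = (f.support.toList.map fun n => |f n|).sum := ((List.mergeSort_perm _ _).map _).sum_eq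
    _ = ∑ n ∈ f.support, |f n| := sum_map_toList _ _

lemma abs_apply_le_sum_abs (n : ℕ) : |f n| ≤ ∑ m ∈ f.support, |f m| := by
  by_cases hn : n ∈ f.support
  · exact single_le_sum (fun m _ => abs_nonneg (f m)) hn
  · rw [Finsupp.notMem_support_iff.1 hn, abs_zero]
    exact sum_nonneg fun m _ => abs_nonneg (f m)

lemma rearrangement_le_iSup (i : ℕ) : rearrangement f i ≤ ⨆ n, |f n| := by
  have hbdd : BddAbove (Set.range fun n => |f n|) := ⟨_, Set.forall_mem_range.2 (abs_apply_le_sum_abs f)⟩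
  rcases lt_or_ge i #f.support with hi | hi
  · rw [rearrangement_of_lt f hi]; exact le_ciSup hbdd _
  · rw [rearrangement_of_le f hi]; exact (abs_nonneg (f 0)).trans (le_ciSup hbdd 0)

noncomputable def rankSet (I : Finset ℕ) : Finset ℕ :=
  {i ∈ I | i < #f.support}.image fun i => (sortedSupport f).getD i 0

lemma getD_sortedSupport_injOn :
    Set.InjOn (fun i => (sortedSupport f).getD i 0) {i | i < #f.support} := by
  intro i hi j hj hij
  simp only [Set.mem_ofPred_eq, ← length_sortedSupport] at hi hj
  simp only [List.getD_eq_getElem _ _ hi, List.getD_eq_getElem _ _ hj] at hij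
  exact (nodup_sortedSupport f).getElem_inj_iff.1 hij

lemma disjoint_rankSet {I I' : Finset ℕ} (h : Disjoint I I') :
    Disjoint (rankSet f I) (rankSet f I') := by
  simp only [rankSet, Finset.disjoint_left, mem_image, mem_filter, not_exists, not_and]
  rintro _ ⟨i, ⟨hiI, hi⟩, rfl⟩ i' ⟨hi'I, hi'⟩ hii'
  exact Finset.disjoint_left.1 h hiI (getD_sortedSupport_injOn f hi' hi hii' ▸ hi'I)

lemma card_rankSet {I : Finset ℕ} (hI : ∀ i ∈ I, i < #f.support) : #(rankSet f I) = #I := by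
  rw [rankSet, filter_true_of_mem hI]
  exact card_image_of_injOn fun i hi j hj => getD_sortedSupport_injOn f (hI i hi) (hI j hj)

lemma exists_eq_rearrangement_of_mem_rankSet {I : Finset ℕ} {n : ℕ} (hn : n ∈ rankSet f I) :
    ∃ i ∈ I, |f n| = rearrangement f i := by
  obtain ⟨i, hi, rfl⟩ := mem_image.1 hn
  rw [mem_filter] at hi
  refine ⟨i, hi.1, ?_⟩
  rw [rearrangement_of_lt f hi.2, List.getD_eq_getElem _ _ ((length_sortedSupport f).symm ▸ hi.2)]

end Rearrangement

lemma sum_Ico_sum_Ico_of_monotone {M : Type*} [AddCommMonoid M] {φ : ℕ → ℕ} (hφ : Monotone φ)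
    (b : ℕ → M) {J T : ℕ} (hJT : J ≤ T) :
    ∑ j ∈ Ico J T, ∑ i ∈ Ico (φ j) (φ (j + 1)), b i = ∑ i ∈ Ico (φ J) (φ T), b i := by
  induction T, hJT using Nat.le_induction with
  | base => simp
  | succ T hJT ih =>
    rw [sum_Ico_succ_top hJT, ih, sum_Ico_consecutive _ (hφ hJT) (hφ T.le_succ)]

lemma Antitone.sum_Ico_le {a : ℕ → ℝ} (ha : Antitone a) (m n : ℕ) :
    ∑ i ∈ Ico m n, a i ≤ (n - m : ℕ) * a m := by
  simpa using sum_le_card_nsmul _ _ _ fun i hi => ha (mem_Ico.1 hi).1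

lemma exists_forall_sum_Ico_le {b : ℕ → ℝ} (hb : Summable b) (hb0 : ∀ j, 0 ≤ b j) {ε : ℝ}
    (hε : 0 < ε) : ∃ J, ∀ T, ∑ j ∈ Ico J T, b j ≤ ε := by
  obtain ⟨J, hJ⟩ := ((tendsto_sum_nat_add b).eventually_lt_const hε).exists
  refine ⟨J, fun T => ?_⟩
  rw [sum_Ico_eq_sum_range]
  refine le_trans ?_ hJ.le
  simp_rw [add_comm J]
  exact ((summable_nat_add_iff J).2 hb).sum_le_tsum _ fun j _ => hb0 _

lemma disjoint_Ico_two_pow {j j' : ℕ} (h : j ≠ j') :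
    Disjoint (Ico (2 ^ j) (2 ^ (j + 1))) (Ico (2 ^ j') (2 ^ (j' + 1))) := by
  rw [Finset.disjoint_left]
  intro i hi hi'
  rw [mem_Ico] at hi hi'
  rcases h.lt_or_gt with h | h
  · have := Nat.pow_le_pow_right two_pos h
    omega
  · have := Nat.pow_le_pow_right two_pos h
    omega

section Estimates

variable {K q q' C : ℝ} {N : (ℕ →₀ ℝ) → ℝ}

lemma two_pow_div_lowerDem_rpow_le (hN : IsCoeffQuasiNorm K N) (hK : 0 < K) (hq' : 1 ≤ q')
    (j : ℕ) :
    ((2 ^ j : ℝ) / lowerDem N (2 ^ (j + 1))) ^ q'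
      ≤ ∑ m ∈ Ico (2 ^ j) (2 ^ (j + 1)),
          ((m + 1 : ℕ) : ℝ) ^ (q' - 1) / lowerDem N (m + 1) ^ q' := by
  have hs : 0 < lowerDem N (2 ^ (j + 1)) := lowerDem_pos hN hK Nat.one_le_two_pow
  have hterm : ∀ m ∈ Ico (2 ^ j) (2 ^ (j + 1)),
      ((2 ^ j : ℝ)) ^ (q' - 1) / lowerDem N (2 ^ (j + 1)) ^ q'
        ≤ ((m + 1 : ℕ) : ℝ) ^ (q' - 1) / lowerDem N (m + 1) ^ q' := fun m hm => by
    obtain ⟨hm1, hm2⟩ := mem_Ico.1 hm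
    have hs' : 0 < lowerDem N (m + 1) := lowerDem_pos hN hK (by omega)
    apply div_le_div₀ (by positivity) _ (by positivity)
    · exact Real.rpow_le_rpow hs'.le (lowerDem_mono hN.nonneg hm2) (by linarith)
    · exact Real.rpow_le_rpow (by positivity) (by exact_mod_cast hm1.trans m.le_succ)
        (by linarith)
  calc ((2 ^ j : ℝ) / lowerDem N (2 ^ (j + 1))) ^ q'
      = (2 ^ j : ℕ) • ((2 ^ j : ℝ) ^ (q' - 1) / lowerDem N (2 ^ (j + 1)) ^ q') := by
        rw [nsmul_eq_mul, Real.div_rpow (by positivity) hs.le, Real.rpow_sub_one (by positivity)]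
        push_cast
        field_simp
    _ = #(Ico (2 ^ j) (2 ^ (j + 1)))
          • ((2 ^ j : ℝ) ^ (q' - 1) / lowerDem N (2 ^ (j + 1)) ^ q') := by
        rw [Nat.card_Ico, pow_succ, mul_two, Nat.add_sub_cancel]
    _ ≤ _ := card_nsmul_le_sum _ _ _ hterm

lemma summable_two_pow_div_lowerDem_rpow (hN : IsCoeffQuasiNorm K N) (hK : 0 < K) (hq' : 1 ≤ q')
    (hsum : Summable fun m : ℕ => ((m + 1 : ℕ) : ℝ) ^ (q' - 1) / lowerDem N (m + 1) ^ q') :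
    Summable fun j : ℕ => ((2 ^ j : ℝ) / lowerDem N (2 ^ (j + 1))) ^ q' := by
  have hH : ∀ m : ℕ, 0 ≤ ((m + 1 : ℕ) : ℝ) ^ (q' - 1) / lowerDem N (m + 1) ^ q' := fun m => by
    have := lowerDem_nonneg hN.nonneg (m + 1)
    positivity
  have hb : ∀ j : ℕ, 0 ≤ ((2 ^ j : ℝ) / lowerDem N (2 ^ (j + 1))) ^ q' := fun j => by
    have := lowerDem_nonneg hN.nonneg (2 ^ (j + 1))
    positivity
  refine summable_of_sum_range_le
    (c := ∑' m : ℕ, ((m + 1 : ℕ) : ℝ) ^ (q' - 1) / lowerDem N (m + 1) ^ q') hb fun n => ?_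
  calc ∑ j ∈ range n, ((2 ^ j : ℝ) / lowerDem N (2 ^ (j + 1))) ^ q'
      ≤ ∑ j ∈ Ico 0 n, ∑ m ∈ Ico (2 ^ j) (2 ^ (j + 1)),
          ((m + 1 : ℕ) : ℝ) ^ (q' - 1) / lowerDem N (m + 1) ^ q' := by
        rw [range_eq_Ico]
        exact sum_le_sum fun j _ => two_pow_div_lowerDem_rpow_le hN hK hq' j
    _ = ∑ m ∈ Ico (2 ^ 0) (2 ^ n), ((m + 1 : ℕ) : ℝ) ^ (q' - 1) / lowerDem N (m + 1) ^ q' :=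
        sum_Ico_sum_Ico_of_monotone (pow_right_mono₀ one_le_two) _ n.zero_le
    _ ≤ _ := hsum.sum_le_tsum _ fun m _ => hH m

lemma sum_rpow_rearrangement_mul_lowerDem_le (hN : IsCoeffQuasiNorm K N) (hconc : IsQConcave q C N)
    (hq : 0 < q) (hC : 0 ≤ C) (f : ℕ →₀ ℝ) (s : Finset ℕ) :
    ∑ j ∈ s, (rearrangement f (2 ^ (j + 2)) * lowerDem N (2 ^ (j + 1))) ^ q
      ≤ (C * (K * N f)) ^ q := by
  set B : ℕ → Finset ℕ := fun j => rankSet f (Ico (2 ^ (j + 1)) (2 ^ (j + 1 + 1)))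
  have hB : (s : Set ℕ).PairwiseDisjoint B := fun j _ j' _ hjj' =>
    disjoint_rankSet f (disjoint_Ico_two_pow (by omega))
  refine (sum_le_sum fun j _ => ?_).trans (hconc.sum_rpow_mul_le hN hq hC s B
    (fun j => rearrangement f (2 ^ (j + 2))) (fun j _ => rearrangement_nonneg f _) hB f
    fun j _ n hn => ?_)
  · rcases lt_or_ge (2 ^ (j + 2)) #f.support with hj | hj
    · have hcard : #(B j) = 2 ^ (j + 1) := by
        rw [card_rankSet f fun i hi => (mem_Ico.1 hi).2.trans hj, Nat.card_Ico, pow_succ _ (j + 1)]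
        omega
      have := lowerDem_nonneg hN.nonneg (2 ^ (j + 1))
      have := rearrangement_nonneg f (2 ^ (j + 2))
      gcongr
      exact lowerDem_le hN.nonneg hcard.ge
    · simp [rearrangement_of_le f hj, Real.zero_rpow hq.ne']
  · obtain ⟨i, hi, hfi⟩ := exists_eq_rearrangement_of_mem_rankSet f hn
    rw [hfi]
    exact rearrangement_antitone f (mem_Ico.1 hi).2.le

lemma sum_Ico_rearrangement_le (hN : IsCoeffQuasiNorm K N) (hK : 0 < K) (hconc : IsQConcave q C N)
    (hqq' : q.HolderConjugate q') (hC : 0 ≤ C) (f : ℕ →₀ ℝ) {J T : ℕ} (hJT : J ≤ T) {ε : ℝ}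
    (hε : 0 ≤ ε) (hb : ∑ j ∈ Ico J T, ((2 ^ j : ℝ) / lowerDem N (2 ^ (j + 1))) ^ q' ≤ ε ^ q') :
    ∑ i ∈ Ico (2 ^ (J + 2)) (2 ^ (T + 2)), rearrangement f i ≤ 4 * (C * (K * N f)) * ε := by
  set x : ℕ → ℝ := fun j => rearrangement f (2 ^ (j + 2)) * lowerDem N (2 ^ (j + 1))
  set y : ℕ → ℝ := fun j => (2 ^ j : ℝ) / lowerDem N (2 ^ (j + 1))
  have hs : ∀ j, 0 < lowerDem N (2 ^ (j + 1)) := fun j => lowerDem_pos hN hK Nat.one_le_two_pow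
  have hx : ∀ j, 0 ≤ x j := fun j => mul_nonneg (rearrangement_nonneg f _) (hs j).le
  have hy : ∀ j, 0 ≤ y j := fun j => div_nonneg (by positivity) (hs j).le
  have hNf : 0 ≤ C * (K * N f) := mul_nonneg hC (mul_nonneg hK.le (hN.nonneg f))
  have hxq : (∑ j ∈ Ico J T, x j ^ q) ^ (1 / q) ≤ C * (K * N f) := by
    rw [one_div, Real.rpow_inv_le_iff_of_pos (sum_nonneg fun j _ => Real.rpow_nonneg (hx j) q)
      hNf hqq'.pos]
    exact sum_rpow_rearrangement_mul_lowerDem_le hN hconc hqq'.pos hC f _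
  have hyq : (∑ j ∈ Ico J T, y j ^ q') ^ (1 / q') ≤ ε := by
    rwa [one_div, Real.rpow_inv_le_iff_of_pos (sum_nonneg fun j _ => Real.rpow_nonneg (hy j) q')
      hε hqq'.symm.pos]
  calc ∑ i ∈ Ico (2 ^ (J + 2)) (2 ^ (T + 2)), rearrangement f i
      = ∑ j ∈ Ico J T, ∑ i ∈ Ico (2 ^ (j + 2)) (2 ^ (j + 1 + 2)), rearrangement f i :=
        (sum_Ico_sum_Ico_of_monotone (φ := fun j => 2 ^ (j + 2))
          (fun a b h => Nat.pow_le_pow_right two_pos (by omega)) _ hJT).symm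
    _ ≤ ∑ j ∈ Ico J T, 4 * (x j * y j) := sum_le_sum fun j _ => by
        refine ((rearrangement_antitone f).sum_Ico_le _ _).trans_eq ?_
        have hpow : 2 ^ (j + 1 + 2) - 2 ^ (j + 2) = 4 * 2 ^ j := by
          simp only [pow_add]
          omega
        have := (hs j).ne'
        simp only [x, y, hpow]
        push_cast
        field_simp
    _ = 4 * ∑ j ∈ Ico J T, x j * y j := (mul_sum _ _ _).symm
    _ ≤ 4 * ((∑ j ∈ Ico J T, x j ^ q) ^ (1 / q) * (∑ j ∈ Ico J T, y j ^ q') ^ (1 / q')) := by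
        gcongr
        exact Real.inner_le_Lp_mul_Lq_of_nonneg _ hqq' (fun j _ => hx j) fun j _ => hy j
    _ ≤ 4 * (C * (K * N f)) * ε := by
        rw [mul_assoc]
        exact mul_le_mul_of_nonneg_left (mul_le_mul hxq hyq (Real.rpow_nonneg
          (sum_nonneg fun j _ => Real.rpow_nonneg (hy j) q') _) hNf) (by norm_num)

lemma sum_abs_le_two_pow_mul_iSup_add (hN : IsCoeffQuasiNorm K N) (hK : 0 < K)
    (hconc : IsQConcave q C N) (hqq' : q.HolderConjugate q') (hC : 0 ≤ C) (f : ℕ →₀ ℝ)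
    {J : ℕ} {ε : ℝ} (hε : 0 ≤ ε)
    (hb : ∀ T, ∑ j ∈ Ico J T, ((2 ^ j : ℝ) / lowerDem N (2 ^ (j + 1))) ^ q' ≤ ε ^ q') :
    ∑ n ∈ f.support, |f n| ≤ 2 ^ (J + 2) * (⨆ n, |f n|) + 4 * (C * (K * N f)) * ε := by
  set T := J + #f.support
  have hk : #f.support ≤ 2 ^ (T + 2) :=
    Nat.lt_two_pow_self.le.trans (Nat.pow_le_pow_right two_pos (by omega))
  calc ∑ n ∈ f.support, |f n| = ∑ i ∈ range #f.support, rearrangement f i :=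
        (sum_range_rearrangement f).symm
    _ ≤ ∑ i ∈ range (2 ^ (T + 2)), rearrangement f i :=
        sum_le_sum_of_subset_of_nonneg (range_subset_range.2 hk) fun i _ _ =>
          rearrangement_nonneg f i
    _ = ∑ i ∈ range (2 ^ (J + 2)), rearrangement f i
          + ∑ i ∈ Ico (2 ^ (J + 2)) (2 ^ (T + 2)), rearrangement f i :=
        (sum_range_add_sum_Ico _ (Nat.pow_le_pow_right two_pos (by omega))).symm
    _ ≤ 2 ^ (J + 2) * (⨆ n, |f n|) + 4 * (C * (K * N f)) * ε := by
        refine add_le_add ?_ ?_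
        · simpa using
            sum_le_card_nsmul (range (2 ^ (J + 2))) _ _ fun i _ => rearrangement_le_iSup f i
        · exact sum_Ico_rearrangement_le hN hK hconc hqq' hC f (by omega) hε (hb T)

end Estimates

/-- Proposition 6.7, case `1 < q < ∞`: if `N` is `q`-concave with
constant `C` and its lower democracy function satisfies
`∑_{m=1}^∞ m^{q'-1}/s_m^{q'} < ∞` with `q' = q/(q-1)`, then `N` is strongly
absolute. -/
theorem stmt15 (K q q' C : ℝ) (hK : 1 ≤ K) (hq : 1 < q) (hq' : q' = q / (q - 1))
    (hC : 1 ≤ C)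
    (N : (ℕ →₀ ℝ) → ℝ) (hN : IsCoeffQuasiNorm K N)
    (hconc : ∀ (k : ℕ) (f : Fin k → (ℕ →₀ ℝ)),
      (∀ i j, i ≠ j → Disjoint (f i).support (f j).support) →
      (∑ i, N (f i) ^ q) ^ (1 / q) ≤ C * N (∑ i, f i))
    (hsum : Summable fun m : ℕ =>
      ((m + 1 : ℕ) : ℝ) ^ (q' - 1) / lowerDem N (m + 1) ^ q') :
    ∀ R : ℝ, 0 < R → ∃ C' > 0, ∀ f : ℕ →₀ ℝ,
      ∑ n ∈ f.support, |f n| ≤ max (C' * ⨆ n, |f n|) (N f / R) := by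
  intro R hR
  have hqq' : q.HolderConjugate q' := (Real.holderConjugate_iff_eq_conjExponent hq).2 hq'
  have hK0 : 0 < K := one_pos.trans_le hK
  have hC0 : 0 < C := one_pos.trans_le hC
  obtain ⟨J, hJ⟩ := exists_forall_sum_Ico_le
    (summable_two_pow_div_lowerDem_rpow hN hK0 hqq'.symm.lt.le hsum)
    (fun j => by have := lowerDem_nonneg hN.nonneg (2 ^ (j + 1)); positivity)
    (ε := (8 * C * K * R)⁻¹ ^ q') (by positivity)
  refine ⟨2 * 2 ^ (J + 2), by positivity, fun f => ?_⟩
  have hsplit := sum_abs_le_two_pow_mul_iSup_add hN hK0 hconc hqq' hC0.le f (by positivity) hJ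
  have htail : 4 * (C * (K * N f)) * (8 * C * K * R)⁻¹ = (N f / R) / 2 := by
    field_simp
    ring
  rw [htail] at hsplit
  rcases le_total (2 ^ (J + 2) * ⨆ n, |f n|) ((N f / R) / 2) with h | h
  · exact hsplit.trans (le_max_of_le_right (by linarith))
  · exact hsplit.trans (le_max_of_le_left (by linarith))
end

section
/- (Proposition 6.9 of the paper: strong absoluteness of the unit vector system of an Orlicz sequence space, stated via the Luxemburg modular.) Let F : [0,∞) → [0,∞) be increasing with F(0) = 0, F(1) = 1 and F(t) > 0 for t > 0; put G(t) = t/F(t) for t > 0. Suppose there is C ≥ 1 with G(s) ≤ C·G(t) whenever 0 < s ≤ t ≤ 1, and that lim_{t→0⁺} G(t) = 0. Then for every R > 0 there exists a constant C′ > 0 (one may take C′ = C/F(δ) for any δ ∈ (0,1] such that G(t) ≤ 1/(R·C) for all 0 < t ≤ δ) with the following property: for every finitely supported a : ℕ → ℝ and every ρ > 0 such that sup_n |a(n)| ≤ ρ and ∑_n F(|a(n)|/ρ) ≤ 1, one has ∑_n |a(n)| ≤ max( C′·sup_n |a(n)|, ρ/R ). (Since the Luxemburg quasi-norm of a in the Orlicz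 sequence space ℓ_F is the infimum of such ρ, this is exactly the strong absoluteness of the unit vector basis of ℓ_F.) -/
/-!
Fix `ε = 1/(2R)` and, using `t / F t → 0`, a `δ > 0` with `t / F t ≤ ε` on `(0, δ]`.
Normalize by `ρ`, so that `∑ F(xₙ) ≤ 1` for `xₙ = |a n|/ρ`. The entries with `xₙ ≤ δ`
satisfy `xₙ ≤ ε F(xₙ)`, so they contribute at most `ε` in total. Each entry with `xₙ > δ` has
`F(xₙ) ≥ F(δ)`, so there are at most `1/F(δ)` of them, and they contribute at most
`sup xₙ / F(δ)`.
-/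

open Finset Filter Topology

variable {F : ℝ → ℝ}

theorem exists_pos_forall_Ioc_div_apply_le
    (hG0 : Tendsto (fun t => t / F t) (𝓝[>] 0) (𝓝 0)) {ε : ℝ} (hε : 0 < ε) :
    ∃ δ > 0, ∀ t ∈ Set.Ioc 0 δ, t / F t ≤ ε := by
  obtain ⟨δ, hδ, hsub⟩ :=
    mem_nhdsGT_iff_exists_Ioc_subset.1 (hG0.eventually (Iic_mem_nhds hε))
  exact ⟨δ, hδ, fun t ht => hsub ht⟩

theorem sum_le_mul_sum_apply_of_div_apply_le {ι : Type*} {s : Finset ι} {x : ι → ℝ} {ε : ℝ}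
    (h : ∀ i ∈ s, 0 < F (x i) ∧ x i / F (x i) ≤ ε) :
    ∑ i ∈ s, x i ≤ ε * ∑ i ∈ s, F (x i) := by
  rw [mul_sum]
  exact sum_le_sum fun i hi => (div_le_iff₀ (h i hi).1).1 (h i hi).2

theorem sum_le_add_div_of_sum_apply_le_one {ι : Type*}
    (hFpos : ∀ t : ℝ, 0 < t → 0 < F t)
    (hFmono : ∀ s t : ℝ, 0 ≤ s → s ≤ t → F s ≤ F t)
    {δ ε M : ℝ} (hδ : 0 < δ) (hsmall : ∀ t ∈ Set.Ioc 0 δ, t / F t ≤ ε) (hM : 0 ≤ M)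
    {s : Finset ι} {x : ι → ℝ} (hx : ∀ i ∈ s, 0 < x i) (hxM : ∀ i ∈ s, x i ≤ M)
    (hmod : ∑ i ∈ s, F (x i) ≤ 1) :
    ∑ i ∈ s, x i ≤ ε + M / F δ := by
  have hFδ : 0 < F δ := hFpos δ hδ
  have hε : 0 ≤ ε := (div_pos hδ hFδ).le.trans (hsmall δ ⟨hδ, le_rfl⟩)
  have hmod_filter (p : ι → Prop) [DecidablePred p] : ∑ i ∈ s.filter p, F (x i) ≤ 1 :=
    (sum_le_sum_of_subset_of_nonneg (filter_subset p s)
      fun i hi _ => (hFpos _ (hx i hi)).le).trans hmod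
  rw [← sum_filter_add_sum_filter_not s (fun i => x i ≤ δ)]
  gcongr ?_ + ?_
  · calc ∑ i ∈ s.filter (fun i => x i ≤ δ), x i
        ≤ ε * ∑ i ∈ s.filter (fun i => x i ≤ δ), F (x i) := by
          refine sum_le_mul_sum_apply_of_div_apply_le fun i hi => ?_
          obtain ⟨his, hiδ⟩ := mem_filter.1 hi
          exact ⟨hFpos _ (hx i his), hsmall _ ⟨hx i his, hiδ⟩⟩
      _ ≤ ε := mul_le_of_le_one_right hε (hmod_filter fun i => x i ≤ δ)
  · set L := s.filter (fun i => ¬ x i ≤ δ)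
    have hcard : (#L : ℝ) * F δ ≤ 1 := by
      refine le_trans ?_ (hmod_filter fun i => ¬ x i ≤ δ)
      rw [← nsmul_eq_mul]
      refine card_nsmul_le_sum _ _ _ fun i hi => ?_
      obtain ⟨-, hiδ⟩ := mem_filter.1 hi
      exact hFmono _ _ hδ.le (not_le.1 hiδ).le
    calc ∑ i ∈ L, x i ≤ #L • M :=
          sum_le_card_nsmul _ _ _ fun i hi => hxM i (filter_subset _ _ hi)
      _ = #L * M := nsmul_eq_mul _ _
      _ ≤ 1 / F δ * M := by gcongr; rwa [le_div_iff₀ hFδ]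
      _ = M / F δ := by ring

theorem stmt17_general (F : ℝ → ℝ)
    (hFpos : ∀ t : ℝ, 0 < t → 0 < F t)
    (hFmono : ∀ s t : ℝ, 0 ≤ s → s ≤ t → F s ≤ F t)
    (hG0 : Filter.Tendsto (fun t : ℝ => t / F t)
      (nhdsWithin 0 (Set.Ioi 0)) (nhds 0)) :
    ∀ R : ℝ, 0 < R → ∃ C' > 0, ∀ (a : ℕ →₀ ℝ) (ρ : ℝ), 0 < ρ →
      (∀ n, |a n| ≤ ρ) → (∑ n ∈ a.support, F (|a n| / ρ)) ≤ 1 →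
      ∑ n ∈ a.support, |a n| ≤ max (C' * ⨆ n, |a n|) (ρ / R) := by
  intro R hR
  obtain ⟨δ, hδ, hsmall⟩ :=
    exists_pos_forall_Ioc_div_apply_le hG0 (by positivity : 0 < 1 / (2 * R))
  have hFδ : 0 < F δ := hFpos δ hδ
  refine ⟨2 / F δ, by positivity, fun a ρ hρ hbound hmod => ?_⟩
  set M := ⨆ n, |a n|
  have hM : ∀ n, |a n| ≤ M := le_ciSup ⟨ρ, by rintro _ ⟨n, rfl⟩; exact hbound n⟩
  have hM0 : 0 ≤ M := (abs_nonneg _).trans (hM 0)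
  have hnormalized := sum_le_add_div_of_sum_apply_le_one hFpos hFmono hδ hsmall
    (div_nonneg hM0 hρ.le) (s := a.support) (x := fun n => |a n| / ρ)
    (fun n hn => div_pos (abs_pos.2 (Finsupp.mem_support_iff.1 hn)) hρ)
    (fun n _ => div_le_div_of_nonneg_right (hM n) hρ.le) hmod
  calc ∑ n ∈ a.support, |a n| = ρ * ∑ n ∈ a.support, |a n| / ρ := by
        rw [mul_sum]; exact sum_congr rfl fun n _ => (mul_div_cancel₀ _ hρ.ne').symm
    _ ≤ ρ * (1 / (2 * R) + M / ρ / F δ) := by gcongr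
    _ = ρ / (2 * R) + M / F δ := by field_simp
    _ ≤ max (2 / F δ * M) (ρ / R) := by
        have h₁ : 2 / F δ * M = 2 * (M / F δ) := by ring
        have h₂ : ρ / R = 2 * (ρ / (2 * R)) := by field_simp
        rw [h₁, h₂]
        rcases le_total (M / F δ) (ρ / (2 * R)) with h | h
        · exact le_max_of_le_right (by linarith)
        · exact le_max_of_le_left (by linarith)

/-- Proposition 6.9: strong absoluteness of the unit vector system of
an Orlicz sequence space, stated via the Luxemburg modular.  `F` is a normalized
Orlicz function, `G t = t / F t` is essentially bounded by `C` on `(0,1]` in the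
monotone sense, and `G → 0` at `0⁺`.  Then for every `R > 0` there is `C' > 0` such
that whenever `ρ > 0` bounds `supₙ |a n|` and the modular `∑ₙ F(|a n|/ρ) ≤ 1`, one
has `∑ₙ |a n| ≤ max (C'·supₙ |a n|) (ρ/R)`. -/
theorem stmt17 (F : ℝ → ℝ) (hF0 : F 0 = 0) (hF1 : F 1 = 1)
    (hFpos : ∀ t : ℝ, 0 < t → 0 < F t)
    (hFmono : ∀ s t : ℝ, 0 ≤ s → s ≤ t → F s ≤ F t)
    (C : ℝ) (hC : 1 ≤ C)
    (hG : ∀ s t : ℝ, 0 < s → s ≤ t → t ≤ 1 → s / F s ≤ C * (t / F t))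
    (hG0 : Filter.Tendsto (fun t : ℝ => t / F t)
      (nhdsWithin 0 (Set.Ioi 0)) (nhds 0)) :
    ∀ R : ℝ, 0 < R → ∃ C' > 0, ∀ (a : ℕ →₀ ℝ) (ρ : ℝ), 0 < ρ →
      (∀ n, |a n| ≤ ρ) → (∑ n ∈ a.support, F (|a n| / ρ)) ≤ 1 →
      ∑ n ∈ a.support, |a n| ≤ max (C' * ⨆ n, |a n|) (ρ / R) :=
  stmt17_general F hFpos hFmono hG0
end

section
/- (Lemma 3.10 of the paper, conclusions (b) and (c), in coefficient form.) Let N be a normalized K-unconditional coefficient quasi-norm and write ⟨g,f⟩ = ∑_n g(n)·f(n). Let (y_m)_{m∈M} be a finite or countable family of finitely supported functions with pairwise disjoint supports, and let (g_m)_{m∈M} be finitely supported functions with supp g_m ⊆ supp y_m and ⟨g_m, y_{m'}⟩ = δ_{m,m'} for all m, m′ ∈ M (good projecting functionals). Suppose the family is well C-complemented: for every finitely supported f : ℕ → ℝ and every finite subset M′ ⊆ M, N(∑_{m∈M′} ⟨g_m, f⟩·y_m) ≤ C·N(f). Let D₁, D₂, D₃ > 0, and let (u_m)_{m∈M} and (h_m)_{m∈M}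 be finitely supported functions such that for all m and n: (i) |u_m(n)| ≤ D₁·|y_m(n)|; (ii) |h_m(n)| ≤ D₂·|g_m(n)|; and (iii) |⟨h_m, u_m⟩| ≥ 1/D₃. Then for every finitely supported family of scalars (c_m)_{m∈M}: N(∑_m c_m·u_m) ≤ D₁·K·N(∑_m c_m·y_m), and N(∑_m c_m·y_m) ≤ C·D₂·D₃·K²·N(∑_m c_m·u_m). -/
/-!
Both estimates are pointwise comparisons followed by `K`-unconditionality: by disjointness,
at each `n ∈ supp y_m` a block sum `∑ c_k v_k` with `v_k` carried by `y_k` equals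
`c_m v_m(n)`. This gives (b) at once. For (c), put `a_m = ⟨h_m, u_m⟩` and
`f = ∑ (c_m / a_m) (h_m / g_m) u_m`. Then `⟨g_m, f⟩ = c_m`, so `∑ c_m y_m` is the
projection of `f`, while `|f| ≤ D₂ D₃ |∑ c_m u_m|` pointwise; hence
`N(∑ c_m y_m) ≤ C K D₂ D₃ N(∑ c_m u_m)`.
-/

open Finset

lemma Finsupp.support_subset_of_abs_le_mul {α : Type*} {f g : α →₀ ℝ} {D : ℝ}
    (h : ∀ n, |f n| ≤ D * |g n|) : f.support ⊆ g.support := by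
  intro n hn
  by_contra hg
  have hfn := h n
  rw [Finsupp.notMem_support_iff.mp hg, abs_zero, mul_zero, abs_nonpos_iff] at hfn
  exact Finsupp.mem_support_iff.mp hn hfn

lemma abs_div_le_of_abs_le_mul {a b D : ℝ} (hD : 0 ≤ D) (h : |a| ≤ D * |b|) :
    |a / b| ≤ D := by
  rcases eq_or_ne b 0 with rfl | hb
  · simpa using hD
  · rwa [abs_div, div_le_iff₀ (abs_pos.mpr hb)]

/-- `n ↦ f n / g n`, which vanishes off `supp g` because `x / 0 = 0`. -/
noncomputable def Finsupp.divOn {α : Type*} (f g : α →₀ ℝ) : α →₀ ℝ :=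
  Finsupp.onFinset g.support (fun n => f n / g n) fun n hn => by
    by_contra hg
    rw [Finsupp.notMem_support_iff.mp hg, div_zero] at hn
    exact hn rfl

lemma Finsupp.divOn_apply {α : Type*} (f g : α →₀ ℝ) (n : α) :
    f.divOn g n = f n / g n := rfl

lemma Finsupp.support_divOn_subset {α : Type*} (f g : α →₀ ℝ) :
    (f.divOn g).support ⊆ g.support :=
  Finsupp.support_onFinset_subset

lemma sum_mul_divOn_mul {α : Type*} {g h u : α →₀ ℝ} (hhg : h.support ⊆ g.support) :
    ∑ n ∈ g.support, g n * (h.divOn g * u) n = ∑ n ∈ h.support, h n * u n := by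
  calc ∑ n ∈ g.support, g n * (h.divOn g * u) n = ∑ n ∈ g.support, h n * u n :=
        sum_congr rfl fun n hn => by
          have hgn : g n ≠ 0 := Finsupp.mem_support_iff.mp hn
          rw [Finsupp.mul_apply, Finsupp.divOn_apply]
          field_simp
    _ = ∑ n ∈ h.support, h n * u n :=
        (sum_subset hhg fun n _ hn => by rw [Finsupp.notMem_support_iff.mp hn, zero_mul]).symm

lemma abs_div_mul_divOn_mul_le {α : Type*} {g h u : α →₀ ℝ} {a c D₂ D₃ : ℝ} (hD₂ : 0 ≤ D₂)
    (hD₃ : 0 < D₃) (hh : ∀ n, |h n| ≤ D₂ * |g n|) (ha : 1 / D₃ ≤ |a|) (n : α) :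
    |c / a * (h.divOn g * u) n| ≤ D₂ * D₃ * |c * u n| := by
  have ha' : |a|⁻¹ ≤ D₃ := inv_le_of_inv_le₀ hD₃ (by rwa [← one_div])
  calc |c / a * (h.divOn g * u) n| = |h n / g n| * |a|⁻¹ * |c * u n| := by
        rw [Finsupp.mul_apply, Finsupp.divOn_apply, abs_mul, abs_mul, abs_div, abs_mul]
        ring
    _ ≤ D₂ * D₃ * |c * u n| := by
        gcongr
        exact abs_div_le_of_abs_le_mul hD₂ (hh n)

lemma IsCoeffQuasiNorm.le_mul_of_abs_le {K : ℝ} {N : (ℕ →₀ ℝ) → ℝ}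
    (hN : IsCoeffQuasiNorm K N) {f g : ℕ →₀ ℝ} {D : ℝ} (hD : 0 ≤ D)
    (h : ∀ n, |f n| ≤ D * |g n|) : N f ≤ K * D * N g := by
  have hfg : ∀ n, |f n| ≤ |(D • g) n| := fun n => by
    rw [Finsupp.smul_apply, smul_eq_mul, abs_mul, abs_of_nonneg hD]
    exact h n
  calc N f ≤ K * N (D • g) := hN.uncond f _ hfg
    _ = K * D * N g := by rw [hN.smul, abs_of_nonneg hD, mul_assoc]

section DisjointBlocks

variable {ι : Type*} {y v w : ι → ℕ →₀ ℝ} {S : Finset ι} {c d : ι → ℝ}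

lemma sum_smul_apply_of_mem_support
    (hy : Pairwise fun i j => Disjoint (y i).support (y j).support)
    (hv : ∀ m, (v m).support ⊆ (y m).support) {m : ι} (hm : m ∈ S) {n : ℕ}
    (hn : n ∈ (y m).support) :
    (∑ k ∈ S, c k • v k) n = c m * v m n := by
  rw [Finsupp.finsetSum_apply, sum_eq_single_of_mem m hm]
  · rfl
  · intro k _ hkm
    have hnk : n ∉ (v k).support := fun hnk =>
      disjoint_left.mp (hy hkm) (hv k hnk) hn
    rw [Finsupp.smul_apply, Finsupp.notMem_support_iff.mp hnk, smul_zero]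

lemma sum_smul_apply_of_notMem_support (hv : ∀ m, (v m).support ⊆ (y m).support)
    {n : ℕ} (hn : ∀ m ∈ S, n ∉ (y m).support) :
    (∑ k ∈ S, c k • v k) n = 0 := by
  rw [Finsupp.finsetSum_apply]
  refine sum_eq_zero fun m hm => ?_
  rw [Finsupp.smul_apply, Finsupp.notMem_support_iff.mp fun h => hn m hm (hv m h),
    smul_zero]

lemma abs_sum_smul_apply_le
    (hy : Pairwise fun i j => Disjoint (y i).support (y j).support)
    (hv : ∀ m, (v m).support ⊆ (y m).support) (hw : ∀ m, (w m).support ⊆ (y m).support)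
    {D : ℝ} (hle : ∀ m ∈ S, ∀ n, |c m * v m n| ≤ D * |d m * w m n|) (n : ℕ) :
    |(∑ k ∈ S, c k • v k) n| ≤ D * |(∑ k ∈ S, d k • w k) n| := by
  by_cases hn : ∃ m ∈ S, n ∈ (y m).support
  · obtain ⟨m, hm, hnm⟩ := hn
    rw [sum_smul_apply_of_mem_support hy hv hm hnm,
      sum_smul_apply_of_mem_support hy hw hm hnm]
    exact hle m hm n
  · push Not at hn
    rw [sum_smul_apply_of_notMem_support hv hn, sum_smul_apply_of_notMem_support hw hn]
    simp

lemma IsCoeffQuasiNorm.sum_smul_le_of_abs_le {K : ℝ} {N : (ℕ →₀ ℝ) → ℝ}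
    (hN : IsCoeffQuasiNorm K N)
    (hy : Pairwise fun i j => Disjoint (y i).support (y j).support)
    (hv : ∀ m, (v m).support ⊆ (y m).support) (hw : ∀ m, (w m).support ⊆ (y m).support)
    {D : ℝ} (hD : 0 ≤ D) (hle : ∀ m ∈ S, ∀ n, |c m * v m n| ≤ D * |d m * w m n|) :
    N (∑ k ∈ S, c k • v k) ≤ K * D * N (∑ k ∈ S, d k • w k) :=
  hN.le_mul_of_abs_le hD (abs_sum_smul_apply_le hy hv hw hle)

lemma IsCoeffQuasiNorm.sum_smul_le_of_complemented {K C D₂ D₃ : ℝ} {N : (ℕ →₀ ℝ) → ℝ}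
    (hN : IsCoeffQuasiNorm K N) (hC : 0 ≤ C) (hD₂ : 0 ≤ D₂) (hD₃ : 0 < D₃)
    {g u h : ι → ℕ →₀ ℝ}
    (hy : Pairwise fun i j => Disjoint (y i).support (y j).support)
    (hgsupp : ∀ m, (g m).support ⊆ (y m).support)
    (hcompl : ∀ f : ℕ →₀ ℝ,
      N (∑ m ∈ S, (∑ n ∈ (g m).support, g m n * f n) • y m) ≤ C * N f)
    (husupp : ∀ m, (u m).support ⊆ (y m).support)
    (hh : ∀ m n, |h m n| ≤ D₂ * |g m n|)
    (hlb : ∀ m, 1 / D₃ ≤ |∑ n ∈ (h m).support, h m n * u m n|) :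
    N (∑ m ∈ S, c m • y m) ≤ C * (K * (D₂ * D₃) * N (∑ m ∈ S, c m • u m)) := by
  have hq : ∀ m, ((h m).divOn (g m) * u m).support ⊆ (y m).support := fun m =>
    Finsupp.support_mul.trans <| inter_subset_left.trans <|
      (Finsupp.support_divOn_subset _ _).trans (hgsupp m)
  have ha : ∀ m, ∑ n ∈ (h m).support, h m n * u m n ≠ 0 := fun m ha0 => by
    have hlbm := hlb m
    rw [ha0, abs_zero] at hlbm
    exact absurd hlbm (not_le.mpr (by positivity))
  set f := ∑ m ∈ S, (c m / ∑ n ∈ (h m).support, h m n * u m n) • ((h m).divOn (g m) * u m)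
  have hpair : ∀ m ∈ S, ∑ n ∈ (g m).support, g m n * f n = c m := fun m hm => by
    calc ∑ n ∈ (g m).support, g m n * f n
        = c m / (∑ n ∈ (h m).support, h m n * u m n) *
            ∑ n ∈ (g m).support, g m n * ((h m).divOn (g m) * u m) n := by
          rw [mul_sum]
          refine sum_congr rfl fun n hn => ?_
          rw [sum_smul_apply_of_mem_support hy hq hm (hgsupp m hn)]
          ring
      _ = c m := by
          rw [sum_mul_divOn_mul (Finsupp.support_subset_of_abs_le_mul (hh m)),
            div_mul_cancel₀ _ (ha m)]
  calc N (∑ m ∈ S, c m • y m)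
      = N (∑ m ∈ S, (∑ n ∈ (g m).support, g m n * f n) • y m) := by
        congr 1
        exact sum_congr rfl fun m hm => by rw [hpair m hm]
    _ ≤ C * N f := hcompl f
    _ ≤ C * (K * (D₂ * D₃) * N (∑ m ∈ S, c m • u m)) := by
        gcongr
        exact hN.sum_smul_le_of_abs_le hy hq husupp (by positivity)
          fun m _ n => abs_div_mul_divOn_mul_le hD₂ hD₃ (hh m) (hlb m) n

end DisjointBlocks

theorem stmt19_general {ι : Type}
    (K C D₁ D₂ D₃ : ℝ) (hK : 1 ≤ K) (hC : 1 ≤ C)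
    (hD₁ : 0 < D₁) (hD₂ : 0 < D₂) (hD₃ : 0 < D₃)
    (N : (ℕ →₀ ℝ) → ℝ) (hN : IsCoeffQuasiNorm K N)
    (y g u h : ι → (ℕ →₀ ℝ))
    (hydisj : ∀ i j, i ≠ j → Disjoint (y i).support (y j).support)
    (hgsupp : ∀ m, (g m).support ⊆ (y m).support)
    (hcompl : ∀ (f : ℕ →₀ ℝ) (M' : Finset ι),
      N (∑ m ∈ M', (∑ n ∈ (g m).support, g m n * f n) • y m) ≤ C * N f)
    (hu : ∀ m n, |u m n| ≤ D₁ * |y m n|)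
    (hh : ∀ m n, |h m n| ≤ D₂ * |g m n|)
    (hlb : ∀ m, 1 / D₃ ≤ |∑ n ∈ (h m).support, h m n * u m n|) :
    ∀ c : ι →₀ ℝ,
      N (∑ m ∈ c.support, c m • u m) ≤
        D₁ * K * N (∑ m ∈ c.support, c m • y m) ∧
      N (∑ m ∈ c.support, c m • y m) ≤
        C * D₂ * D₃ * K ^ 2 * N (∑ m ∈ c.support, c m • u m) := by
  intro c
  have hy : Pairwise fun i j => Disjoint (y i).support (y j).support := hydisj
  have husupp : ∀ m, (u m).support ⊆ (y m).support := fun m =>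
    Finsupp.support_subset_of_abs_le_mul (hu m)
  refine ⟨?_, ?_⟩
  · calc N (∑ m ∈ c.support, c m • u m)
        ≤ K * D₁ * N (∑ m ∈ c.support, c m • y m) :=
          hN.sum_smul_le_of_abs_le hy husupp (fun _ => subset_rfl) hD₁.le fun m _ n => by
            rw [abs_mul, abs_mul, mul_left_comm]
            gcongr
            exact hu m n
      _ = D₁ * K * N (∑ m ∈ c.support, c m • y m) := by ring
  · have hC₀ : 0 ≤ C := by linarith
    have hNu := hN.nonneg (∑ m ∈ c.support, c m • u m)
    calc N (∑ m ∈ c.support, c m • y m)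
        ≤ C * (K * (D₂ * D₃) * N (∑ m ∈ c.support, c m • u m)) :=
          hN.sum_smul_le_of_complemented hC₀ hD₂.le hD₃ hy hgsupp (fun f => hcompl f _)
            husupp hh hlb
      _ = C * D₂ * D₃ * N (∑ m ∈ c.support, c m • u m) * K := by ring
      _ ≤ C * D₂ * D₃ * N (∑ m ∈ c.support, c m • u m) * K ^ 2 := by
          gcongr
          nlinarith
      _ = C * D₂ * D₃ * K ^ 2 * N (∑ m ∈ c.support, c m • u m) := by ring

/-- Lemma 3.10, conclusions (b) and (c), in coefficient form.
`⟨g,f⟩ = ∑ₙ g n · f n` is the natural pairing.  Given a well `C`-complemented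
disjointly supported family `(y_m)` with good projecting functionals `(g_m)`, and
`(u_m)`, `(h_m)` satisfying `|u_m(n)| ≤ D₁|y_m(n)|`, `|h_m(n)| ≤ D₂|g_m(n)|` and
`|⟨h_m,u_m⟩| ≥ 1/D₃`, every finitely supported scalar family `c` satisfies
`N(∑ c_m u_m) ≤ D₁K·N(∑ c_m y_m)` and `N(∑ c_m y_m) ≤ CD₂D₃K²·N(∑ c_m u_m)`. -/
theorem stmt19 {ι : Type} [DecidableEq ι] [Countable ι]
    (K C D₁ D₂ D₃ : ℝ) (hK : 1 ≤ K) (hC : 1 ≤ C)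
    (hD₁ : 0 < D₁) (hD₂ : 0 < D₂) (hD₃ : 0 < D₃)
    (N : (ℕ →₀ ℝ) → ℝ) (hN : IsCoeffQuasiNorm K N)
    (y g u h : ι → (ℕ →₀ ℝ))
    (hydisj : ∀ i j, i ≠ j → Disjoint (y i).support (y j).support)
    (hgsupp : ∀ m, (g m).support ⊆ (y m).support)
    (hbi : ∀ m m', (∑ n ∈ (g m).support, g m n * y m' n) =
      if m = m' then 1 else 0)
    (hcompl : ∀ (f : ℕ →₀ ℝ) (M' : Finset ι),
      N (∑ m ∈ M', (∑ n ∈ (g m).support, g m n * f n) • y m) ≤ C * N f)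
    (hu : ∀ m n, |u m n| ≤ D₁ * |y m n|)
    (hh : ∀ m n, |h m n| ≤ D₂ * |g m n|)
    (hlb : ∀ m, 1 / D₃ ≤ |∑ n ∈ (h m).support, h m n * u m n|) :
    ∀ c : ι →₀ ℝ,
      N (∑ m ∈ c.support, c m • u m) ≤
        D₁ * K * N (∑ m ∈ c.support, c m • y m) ∧
      N (∑ m ∈ c.support, c m • y m) ≤
        C * D₂ * D₃ * K ^ 2 * N (∑ m ∈ c.support, c m • u m) :=
  stmt19_general K C D₁ D₂ D₃ hK hC hD₁ hD₂ hD₃ N hN y g u h hydisj hgsupp hcompl hu hh hlb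
end
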